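/- arXiv:2202.04043 — 9 statements merged into one kernel-verified Lean document; each statement's English description precedes it below -/
import Mathlib

section
/- In the polynomial ring ℂ[x,y] (or the power series ring ℂ[[x,y]]), the ideal (y, x^m) is integrally closed for every positive integer m, where an element h is integral over an ideal J if it satisfies a monic equation h^n + a_1 h^{n-1} + ... + a_n = 0 with a_i ∈ J^i. -/
open MvPowerSeries Finsupp

noncomputable def wt (m : ℕ) (d : Fin 2 →₀ ℕ) : ℕ := d 0 + m * d 1

lemma wt_add (m : ℕ) (a b : Fin 2 →₀ ℕ) : wt m (a + b) = wt m a + wt m b := by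
  simp [wt, Finsupp.add_apply]; ring

def OrdGe (m v : ℕ) (f : MvPowerSeries (Fin 2) ℂ) : Prop :=
  ∀ d, wt m d < v → MvPowerSeries.coeff d f = 0

lemma ordGe_mul {m a b : ℕ} {f g : MvPowerSeries (Fin 2) ℂ}
    (hf : OrdGe m a f) (hg : OrdGe m b g) : OrdGe m (a + b) (f * g) := by
  intro d hd
  rw [MvPowerSeries.coeff_mul]
  apply Finset.sum_eq_zero
  rintro ⟨e1, e2⟩ he
  rw [Finset.HasAntidiagonal.mem_antidiagonal] at he
  show (coeff e1) f * (coeff e2) g = 0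
  have h2 : wt m e1 + wt m e2 < a + b := by rw [← wt_add, he]; exact hd
  rcases lt_or_ge (wt m e1) a with h | h
  · rw [hf _ h, zero_mul]
  · rw [hg _ (by omega), mul_zero]

lemma wt_single_1 (m : ℕ) : wt m (single (1 : Fin 2) 1) = m := by
  simp [wt, Finsupp.single_apply]

lemma wt_single_0 (m : ℕ) : wt m (single (0 : Fin 2) m) = m := by
  simp [wt, Finsupp.single_apply]

noncomputable def Jm (m : ℕ) : Ideal (MvPowerSeries (Fin 2) ℂ) :=
  Ideal.span {(X 1 : MvPowerSeries (Fin 2) ℂ), (X 0 : MvPowerSeries (Fin 2) ℂ) ^ m}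

lemma ordGe_of_mem {m : ℕ} {f : MvPowerSeries (Fin 2) ℂ} (hf : f ∈ Jm m) :
    OrdGe m m f := by
  refine Submodule.span_induction ?_ ?_ ?_ ?_ hf
  · rintro x (rfl | rfl)
    · intro d hd
      rw [MvPowerSeries.coeff_X, if_neg]
      rintro rfl
      rw [wt_single_1] at hd; omega
    · intro d hd
      rw [MvPowerSeries.coeff_X_pow, if_neg]
      rintro rfl
      rw [wt_single_0] at hd; omega
  · intro d hd; exact (MvPowerSeries.coeff d).map_zero
  · intro x y _ _ hx hy d hd
    rw [map_add, hx d hd, hy d hd, add_zero]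
  · intro r x _ hx
    have : OrdGe m (0 + m) (r * x) := ordGe_mul (fun d hd => absurd hd (by omega)) hx
    simpa using this

lemma mem_of_ordGe {m : ℕ} (hm : 0 < m) {f : MvPowerSeries (Fin 2) ℂ} (hf : OrdGe m m f) :
    f ∈ Jm m := by
  rw [Jm, Ideal.mem_span_pair]
  classical
  refine ⟨(id (α := MvPowerSeries (Fin 2) ℂ) fun d => (MvPowerSeries.coeff (d + single 1 1)) f),
    (id (α := MvPowerSeries (Fin 2) ℂ) fun d => if d 1 = 0 then (MvPowerSeries.coeff (d + single 0 m)) f else 0), ?_⟩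
  ext d
  rw [map_add, MvPowerSeries.X_def, MvPowerSeries.X_pow_eq,
    MvPowerSeries.coeff_mul_monomial, MvPowerSeries.coeff_mul_monomial]
  by_cases h1 : (1 : ℕ) ≤ d 1
  · rw [if_pos (Finsupp.single_le_iff.mpr h1)]
    have hd : d - single 1 1 + single 1 1 = d := tsub_add_cancel_of_le (Finsupp.single_le_iff.mpr h1)
    rw [MvPowerSeries.coeff_apply]; change (MvPowerSeries.coeff (d - single 1 1 + single 1 1)) f * 1 + _ = _; rw [hd, mul_one]
    by_cases h2 : single (0 : Fin 2) m ≤ d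
    · have h3 : (d - single (0:Fin 2) m) 1 = d 1 := by
        rw [Finsupp.tsub_apply, Finsupp.single_apply]; simp
      rw [if_pos h2]
      simp only [MvPowerSeries.coeff_apply, id_eq]
      change f d + (if (d - single (0 : Fin 2) m) 1 = 0 then f (d - single (0 : Fin 2) m + single 0 m) else 0) * 1 = f d
      rw [if_neg (by omega), zero_mul, add_zero]
    · rw [if_neg h2, add_zero]
  · rw [if_neg (by rw [Finsupp.single_le_iff]; omega), zero_add]
    by_cases h2 : m ≤ d 0
    · rw [if_pos (Finsupp.single_le_iff.mpr h2), MvPowerSeries.coeff_apply]; change (if (d - single (0 : Fin 2) m) 1 = 0 then (MvPowerSeries.coeff (d - single (0 : Fin 2) m + single 0 m)) f else 0) * 1 = _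
      have h3 : (d - single (0:Fin 2) m) 1 = d 1 := by
        rw [Finsupp.tsub_apply, Finsupp.single_apply]; simp
      rw [if_pos (by omega), tsub_add_cancel_of_le (Finsupp.single_le_iff.mpr h2), mul_one]
    · rw [if_neg (by rw [Finsupp.single_le_iff]; omega)]
      have h4 : d 1 = 0 := by omega
      exact (hf d (by simp only [wt, h4, mul_zero]; omega)).symm

lemma ordGe_of_mem_pow {m : ℕ} {i : ℕ} {f : MvPowerSeries (Fin 2) ℂ} (hf : f ∈ (Jm m) ^ i) :
    OrdGe m (m * i) f := by
  induction i generalizing f with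
  | zero => intro d hd; omega
  | succ k ih =>
    rw [pow_succ] at hf
    refine Submodule.mul_induction_on hf ?_ ?_
    · intro x hx y hy
      have := ordGe_mul (ih hx) (ordGe_of_mem hy)
      simpa [Nat.mul_succ] using this
    · intro x y hx hy d hd
      rw [map_add, hx d hd, hy d hd, add_zero]

lemma pow_key {m v : ℕ} {f : MvPowerSeries (Fin 2) ℂ} {d : Fin 2 →₀ ℕ}
    (hd : wt m d = v)
    (hsmall : ∀ e, wt m e < v ∨ (wt m e = v ∧ e 1 < d 1) → MvPowerSeries.coeff e f = 0)
    (k : ℕ) :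
    (∀ e, wt m e < k * v ∨ (wt m e = k * v ∧ e 1 < k * d 1) →
        MvPowerSeries.coeff e (f ^ k) = 0) ∧
      MvPowerSeries.coeff (k • d) (f ^ k) = (MvPowerSeries.coeff d f) ^ k := by
  induction k with
  | zero =>
    constructor
    · intro e he; rcases he with h | ⟨_, h⟩ <;> omega
    · simp
  | succ k ih =>
    obtain ⟨ih1, ih2⟩ := ih
    constructor
    · intro e he
      rw [pow_succ, MvPowerSeries.coeff_mul]
      apply Finset.sum_eq_zero
      rintro ⟨e1, e2⟩ hmem
      rw [Finset.HasAntidiagonal.mem_antidiagonal] at hmem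
      show MvPowerSeries.coeff e1 (f ^ k) * MvPowerSeries.coeff e2 f = 0
      have hw : wt m e1 + wt m e2 = wt m e := by rw [← wt_add, hmem]
      have h1 : e1 1 + e2 1 = e 1 := by rw [← hmem]; simp
      have q1 : (k + 1) * v = k * v + v := by ring
      have q2 : (k + 1) * d 1 = k * d 1 + d 1 := by ring
      have : (wt m e1 < k * v ∨ (wt m e1 = k * v ∧ e1 1 < k * d 1)) ∨
          (wt m e2 < v ∨ (wt m e2 = v ∧ e2 1 < d 1)) := by omega
      rcases this with h | h
      · rw [ih1 _ h, zero_mul]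
      · rw [hsmall _ h, mul_zero]
    · rw [pow_succ, MvPowerSeries.coeff_mul]
      rw [Finset.sum_eq_single ((k • d : Fin 2 →₀ ℕ), d)]
      · rw [ih2, pow_succ]
      · rintro ⟨e1, e2⟩ hmem hne
        rw [Finset.HasAntidiagonal.mem_antidiagonal] at hmem
        show MvPowerSeries.coeff e1 (f ^ k) * MvPowerSeries.coeff e2 f = 0
        by_cases hc1 : wt m e1 < k * v ∨ (wt m e1 = k * v ∧ e1 1 < k * d 1)
        · rw [ih1 _ hc1, zero_mul]
        by_cases hc2 : wt m e2 < v ∨ (wt m e2 = v ∧ e2 1 < d 1)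
        · rw [hsmall _ hc2, mul_zero]
        exfalso
        push_neg at hc1 hc2
        have hw : wt m e1 + wt m e2 = (k + 1) * v := by
          rw [← wt_add, hmem]
          have h5 : wt m ((k + 1) • d) = (k + 1) * wt m d := by
            simp [wt, Finsupp.smul_apply, smul_eq_mul]; ring
          rw [h5, hd]
        have hw1 : e1 1 + e2 1 = (k + 1) * d 1 := by
          have := congrArg (fun x : Fin 2 →₀ ℕ => x 1) hmem
          simpa [Finsupp.add_apply, Finsupp.smul_apply, smul_eq_mul] using this
        have q1 : (k + 1) * v = k * v + v := by ring
        have q2 : (k + 1) * d 1 = k * d 1 + d 1 := by ring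
        have he1w : wt m e1 = k * v := by omega
        have he2w : wt m e2 = v := by omega
        have he11 : e1 1 = k * d 1 := by omega
        have he21 : e2 1 = d 1 := by omega
        apply hne
        have hd2 : e2 = d := by
          ext i
          fin_cases i
          · show e2 0 = d 0
            have a1 : wt m e2 = e2 0 + m * d 1 := by rw [wt, he21]
            have a2 : v = d 0 + m * d 1 := by rw [← hd]; rfl
            omega
          · exact he21
        have hd1 : e1 = k • d := by
          ext i
          fin_cases i
          · show e1 0 = (k • d : Fin 2 →₀ ℕ) 0
            have a1 : wt m e1 = e1 0 + m * (k * d 1) := by rw [wt, he11]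
            have a2 : k * v = k * d 0 + m * (k * d 1) := by rw [← hd, wt]; ring
            have a3 : (k • d : Fin 2 →₀ ℕ) 0 = k * d 0 := by
              simp [Finsupp.smul_apply, smul_eq_mul]
            omega
          · show e1 1 = (k • d : Fin 2 →₀ ℕ) 1
            have a3 : (k • d : Fin 2 →₀ ℕ) 1 = k * d 1 := by
              simp [Finsupp.smul_apply, smul_eq_mul]
            omega
        rw [hd1, hd2]
      · intro h
        exact absurd (Finset.HasAntidiagonal.mem_antidiagonal.mpr (succ_nsmul d k).symm) h

/-- `f` is integral over the ideal `J`: it satisfies a monic equation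
`f^n + a_1 f^{n-1} + ... + a_n = 0` with `a_i ∈ J^i`. -/
def IsIntegralOverIdeal {R : Type*} [CommRing R] (J : Ideal R) (f : R) : Prop :=
  ∃ n : ℕ, 0 < n ∧ ∃ a : ℕ → R, (∀ i ∈ Finset.Icc 1 n, a i ∈ J ^ i) ∧
    f ^ n + ∑ i ∈ Finset.Icc 1 n, a i * f ^ (n - i) = 0

/-- `J` is integrally closed: it contains every element integral over it. -/
def IdealIsIntegrallyClosed {R : Type*} [CommRing R] (J : Ideal R) : Prop :=
  ∀ f, IsIntegralOverIdeal J f → f ∈ J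

open MvPowerSeries in
/-- In `ℂ[[x,y]]`, the ideal `(y, x^m)` is integrally closed for every `m ≥ 1`. -/
theorem ideal_y_xm_integrallyClosed (m : ℕ) (hm : 0 < m) :
    IdealIsIntegrallyClosed
      (Ideal.span {(X 1 : MvPowerSeries (Fin 2) ℂ), (X 0 : MvPowerSeries (Fin 2) ℂ) ^ m}) := by
  classical
  intro f hf
  show f ∈ Jm m
  by_contra hfJ
  have hnot : ¬ OrdGe m m f := fun h => hfJ (mem_of_ordGe hm h)
  rw [OrdGe] at hnot
  push_neg at hnot
  obtain ⟨d0, hd0, hc0⟩ := hnot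
  have hP : ∃ w, ∃ e : Fin 2 →₀ ℕ, wt m e = w ∧ MvPowerSeries.coeff e f ≠ 0 :=
    ⟨wt m d0, d0, rfl, hc0⟩
  obtain ⟨d1', hd1', hc1'⟩ := Nat.find_spec hP
  set v := Nat.find hP with hv
  have hvm : v < m := lt_of_le_of_lt (Nat.find_le ⟨d0, rfl, hc0⟩) hd0
  have hvmin : ∀ e : Fin 2 →₀ ℕ, wt m e < v → MvPowerSeries.coeff e f = 0 := by
    intro e he
    by_contra hce
    exact Nat.find_min hP he ⟨e, rfl, hce⟩
  have hQ : ∃ t, ∃ e : Fin 2 →₀ ℕ, wt m e = v ∧ e 1 = t ∧ MvPowerSeries.coeff e f ≠ 0 :=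
    ⟨d1' 1, d1', hd1', rfl, hc1'⟩
  obtain ⟨d, hdw, hdt, hdc⟩ := Nat.find_spec hQ
  have hdmin : ∀ e : Fin 2 →₀ ℕ, wt m e = v → e 1 < d 1 → MvPowerSeries.coeff e f = 0 := by
    intro e hew het
    by_contra hce
    exact Nat.find_min hQ (hdt ▸ het) ⟨e, hew, rfl, hce⟩
  have hsmall : ∀ e, wt m e < v ∨ (wt m e = v ∧ e 1 < d 1) → MvPowerSeries.coeff e f = 0 := by
    rintro e (h | ⟨h1, h2⟩)
    · exact hvmin e h
    · exact hdmin e h1 h2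
  obtain ⟨n, hn, a, ha, heq⟩ := hf
  have key := pow_key hdw hsmall
  have hwnd : wt m (n • d) = n * v := by
    simp only [wt, Finsupp.smul_apply, smul_eq_mul]
    rw [← hdw, wt]; ring
  have hterm : ∀ i ∈ Finset.Icc 1 n, MvPowerSeries.coeff (n • d) (a i * f ^ (n - i)) = 0 := by
    intro i hi
    rw [Finset.mem_Icc] at hi
    rw [MvPowerSeries.coeff_mul]
    apply Finset.sum_eq_zero
    rintro ⟨e1, e2⟩ hmem
    rw [Finset.HasAntidiagonal.mem_antidiagonal] at hmem
    show MvPowerSeries.coeff e1 (a i) * MvPowerSeries.coeff e2 (f ^ (n - i)) = 0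
    have hw : wt m e1 + wt m e2 = n * v := by rw [← wt_add, hmem, hwnd]
    by_cases h1 : wt m e1 < m * i
    · rw [ordGe_of_mem_pow (ha i (Finset.mem_Icc.mpr hi)) e1 h1, zero_mul]
    · have hvi : v * i < m * i := Nat.mul_lt_mul_of_pos_right hvm (by omega)
      have hs : (n - i) * v + i * v = n * v := by
        rw [← add_mul]; congr 1; omega
      have hcomm : i * v = v * i := Nat.mul_comm _ _
      have h2 : wt m e2 < (n - i) * v := by omega
      rw [(key (n - i)).1 e2 (Or.inl h2), mul_zero]
  have h0 := congrArg (MvPowerSeries.coeff (n • d)) heq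
  rw [map_add, map_sum, map_zero] at h0
  rw [Finset.sum_congr rfl hterm, Finset.sum_const_zero, add_zero] at h0
  rw [(key n).2] at h0
  exact hdc (pow_eq_zero_iff (by omega) |>.mp h0)
end

section
/- In ℂ[[x,y,z]], the element (z+x+y)·x·y is integral over the ideal generated by (z+x+y)^2, (z+x+y)x^2, (z+x+y)y^2, and (x^2+y^2)(x^2+2y^2). -/
/-! The identity `3 (wxy)^2 = w^2 g - (wx^2)^2 - 2 (wy^2)^2`, with `w = z + x + y` and
`g = (x^2 + y^2)(x^2 + 2y^2)`, puts `((z+x+y)xy)^2` in `J^2` once `3` is invertible, so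
`(z+x+y)xy` is a root of `T^2 - ((z+x+y)xy)^2`. -/

theorem isIntegralOverIdeal_of_pow_mem_pow {R : Type*} [CommRing R] {J : Ideal R} {f : R}
    {n : ℕ} (hn : 0 < n) (hf : f ^ n ∈ J ^ n) : IsIntegralOverIdeal J f := by
  refine ⟨n, hn, fun i => if i = n then -f ^ n else 0, fun i _ => ?_, ?_⟩
  · dsimp only
    split_ifs with hi
    · subst hi
      exact neg_mem hf
    · exact zero_mem _
  · rw [Finset.sum_eq_single_of_mem n (Finset.mem_Icc.mpr ⟨hn, le_rfl⟩)
      (fun i _ hi => by simp [hi])]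
    simp

theorem zxy_sq_mem_span_sq {R : Type*} [CommRing R] (h3 : IsUnit (3 : R)) (x y z : R) :
    ((z + x + y) * x * y) ^ 2 ∈
      Ideal.span {(z + x + y) ^ 2, (z + x + y) * x ^ 2, (z + x + y) * y ^ 2,
        (x ^ 2 + y ^ 2) * (x ^ 2 + 2 * y ^ 2)} ^ 2 := by
  set w := z + x + y
  set g := (x ^ 2 + y ^ 2) * (x ^ 2 + 2 * y ^ 2)
  set J : Ideal R := Ideal.span {w ^ 2, w * x ^ 2, w * y ^ 2, g}
  have hw : w ^ 2 ∈ J := Ideal.subset_span (by simp)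
  have hx : w * x ^ 2 ∈ J := Ideal.subset_span (by simp)
  have hy : w * y ^ 2 ∈ J := Ideal.subset_span (by simp)
  have hg : g ∈ J := Ideal.subset_span (by simp)
  have key : 3 * (w * x * y) ^ 2 = w ^ 2 * g - (w * x ^ 2) ^ 2 - 2 * (w * y ^ 2) ^ 2 := by
    simp only [w, g]; ring
  rw [← Ideal.unit_mul_mem_iff_mem _ h3, key, sq J]
  exact sub_mem (sub_mem (Ideal.mul_mem_mul hw hg) (sq (w * x ^ 2) ▸ Ideal.mul_mem_mul hx hx))
    (Ideal.mul_mem_left _ _ (sq (w * y ^ 2) ▸ Ideal.mul_mem_mul hy hy))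

open MvPowerSeries in
/-- In `ℂ[[x,y,z]]`, the element `(z+x+y)·x·y` is integral over the ideal generated by
`(z+x+y)^2, (z+x+y)x^2, (z+x+y)y^2, (x^2+y^2)(x^2+2y^2)`. -/
theorem zxy_integral_over_product_ideal :
    letI x : MvPowerSeries (Fin 3) ℂ := X 0
    letI y : MvPowerSeries (Fin 3) ℂ := X 1
    letI z : MvPowerSeries (Fin 3) ℂ := X 2
    IsIntegralOverIdeal
      (Ideal.span {(z + x + y) ^ 2, (z + x + y) * x ^ 2, (z + x + y) * y ^ 2,
        (x ^ 2 + y ^ 2) * (x ^ 2 + 2 * y ^ 2)})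
      ((z + x + y) * x * y) := by
  have h3 : IsUnit (3 : MvPowerSeries (Fin 3) ℂ) :=
    map_ofNat (algebraMap ℂ (MvPowerSeries (Fin 3) ℂ)) 3 ▸ (IsUnit.mk0 (3 : ℂ) three_ne_zero).map _
  exact isIntegralOverIdeal_of_pow_mem_pow two_pos (zxy_sq_mem_span_sq h3 _ _ _)
end

section
/- In ℂ[[x,y,z]], the element (z+x+y)·x·y does NOT belong to the product ideal (z+x+y, x^2+y^2)·(z+x+y, x^2+2y^2). Consequently this product ideal is not integrally closed. -/
open MvPowerSeries Finsupp

noncomputable abbrev EE (a b c : ℕ) : Fin 3 →₀ ℕ := single 0 a + single 1 b + single 2 c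

lemma EE_add (a b c a' b' c' : ℕ) : EE a b c + EE a' b' c' = EE (a+a') (b+b') (c+c') := by
  ext i; fin_cases i <;> simp [EE]

lemma EE_le_iff (a b c a' b' c' : ℕ) : EE a' b' c' ≤ EE a b c ↔ a' ≤ a ∧ b' ≤ b ∧ c' ≤ c := by
  rw [Finsupp.le_def]
  constructor
  · intro h; exact ⟨by simpa [EE] using h 0, by simpa [EE] using h 1, by simpa [EE] using h 2⟩
  · rintro ⟨h1, h2, h3⟩ i; fin_cases i <;> simpa [EE]

lemma EE_sub (a b c a' b' c' : ℕ) : EE a b c - EE a' b' c' = EE (a-a') (b-b') (c-c') := by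
  ext i; fin_cases i <;> simp [EE, tsub_apply]

lemma EE_inj (a b c a' b' c' : ℕ) : EE a b c = EE a' b' c' ↔ a = a' ∧ b = b' ∧ c = c' := by
  constructor
  · intro h
    refine ⟨?_, ?_, ?_⟩
    · simpa [EE] using DFunLike.congr_fun h (0 : Fin 3)
    · simpa [EE] using DFunLike.congr_fun h (1 : Fin 3)
    · simpa [EE] using DFunLike.congr_fun h (2 : Fin 3)
  · rintro ⟨rfl, rfl, rfl⟩; rfl

lemma mono_mul (a b c a' b' c' : ℕ) (u v : ℂ) :
    monomial (EE a b c) u * monomial (EE a' b' c') v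
      = monomial (EE (a+a') (b+b') (c+c')) (u*v) := by
  rw [monomial_mul_monomial, EE_add]

lemma coeff_mul_mono (a b c a' b' c' : ℕ) (u : ℂ) (A : MvPowerSeries (Fin 3) ℂ) :
    coeff (EE a b c) (A * monomial (EE a' b' c') u)
      = if a' ≤ a ∧ b' ≤ b ∧ c' ≤ c then coeff (EE (a-a') (b-b') (c-c')) A * u else 0 := by
  rw [coeff_mul_monomial]
  simp only [EE_le_iff, EE_sub]

lemma coeff_mono (a b c a' b' c' : ℕ) (u : ℂ) :
    coeff (EE a b c) (monomial (EE a' b' c') u)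
      = if a = a' ∧ b = b' ∧ c = c' then u else 0 := by
  classical rw [coeff_monomial]
  simp only [EE_inj]

lemma single0 : single (0 : Fin 3) 1 = EE 1 0 0 := by ext i; fin_cases i <;> simp [EE]
lemma single1 : single (1 : Fin 3) 1 = EE 0 1 0 := by ext i; fin_cases i <;> simp [EE]
lemma single2 : single (2 : Fin 3) 1 = EE 0 0 1 := by ext i; fin_cases i <;> simp [EE]
lemma X0_eq : (X 0 : MvPowerSeries (Fin 3) ℂ) = monomial (EE 1 0 0) 1 := by
  rw [X_def, single0]
lemma X1_eq : (X 1 : MvPowerSeries (Fin 3) ℂ) = monomial (EE 0 1 0) 1 := by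
  rw [X_def, single1]
lemma X2_eq : (X 2 : MvPowerSeries (Fin 3) ℂ) = monomial (EE 0 0 1) 1 := by
  rw [X_def, single2]
lemma two_eq : (2 : MvPowerSeries (Fin 3) ℂ) = monomial (EE 0 0 0) 2 := by
  have h0 : EE 0 0 0 = 0 := by ext i; fin_cases i <;> simp [EE]
  rw [h0, monomial_zero_eq_C_apply, ← map_ofNat (C (σ := Fin 3) (R := ℂ)) 2]

lemma key_not_mem :
    (X 2 + X 0 + X 1) * X 0 * X 1 ∉
      Ideal.span {(X 2 + X 0 + X 1 : MvPowerSeries (Fin 3) ℂ), X 0 ^ 2 + X 1 ^ 2} *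
        Ideal.span {X 2 + X 0 + X 1, X 0 ^ 2 + 2 * X 1 ^ 2} := by
  intro hmem
  rw [Ideal.span_pair_mul_span_pair, Ideal.mem_span_insert] at hmem
  obtain ⟨A, r1, hr1, hA⟩ := hmem
  rw [Ideal.mem_span_insert] at hr1
  obtain ⟨B, r2, hr2, hB⟩ := hr1
  rw [Ideal.mem_span_insert] at hr2
  obtain ⟨Cc, r3, hr3, hC⟩ := hr2
  rw [Ideal.mem_span_singleton] at hr3
  obtain ⟨D, hD⟩ := hr3
  have hEq : (X 2 + X 0 + X 1) * X 0 * X 1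
      = A * ((X 2 + X 0 + X 1) * (X 2 + X 0 + X 1))
        + B * ((X 2 + X 0 + X 1) * (X 0 ^ 2 + 2 * X 1 ^ 2))
        + Cc * ((X 0 ^ 2 + X 1 ^ 2) * (X 2 + X 0 + X 1))
        + D * ((X 0 ^ 2 + X 1 ^ 2) * (X 0 ^ 2 + 2 * X 1 ^ 2)) := by
    rw [hA, hB, hC, hD]; ring
  have hc1 := congrArg (coeff (EE 0 0 3)) hEq
  have hc2 := congrArg (coeff (EE 1 0 2)) hEq
  have hc3 := congrArg (coeff (EE 0 1 2)) hEq
  have hc4 := congrArg (coeff (EE 1 1 1)) hEq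
  simp only [X0_eq, X1_eq, X2_eq, two_eq, pow_two, add_mul, mul_add, mono_mul, map_add,
    coeff_mul_mono, coeff_mono, one_mul, mul_one] at hc1 hc2 hc3 hc4
  norm_num at hc1 hc2 hc3 hc4
  exact one_ne_zero (α := ℂ) (by linear_combination hc4 - 2*hc2 - 2*hc3 + 6*hc1)


open MvPowerSeries in
/-- In `ℂ[[x,y,z]]`, the element `(z+x+y)·x·y` does not lie in the product ideal
`(z+x+y, x²+y²)·(z+x+y, x²+2y²)`, and consequently this product ideal is not
integrally closed. -/
theorem zxy_not_mem_product_ideal_and_not_integrallyClosed :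
    letI x : MvPowerSeries (Fin 3) ℂ := X 0
    letI y : MvPowerSeries (Fin 3) ℂ := X 1
    letI z : MvPowerSeries (Fin 3) ℂ := X 2
    (z + x + y) * x * y ∉
      Ideal.span {z + x + y, x ^ 2 + y ^ 2} * Ideal.span {z + x + y, x ^ 2 + 2 * y ^ 2} ∧
    ¬ IdealIsIntegrallyClosed
      (Ideal.span {z + x + y, x ^ 2 + y ^ 2} * Ideal.span {z + x + y, x ^ 2 + 2 * y ^ 2}) := by
  set x : MvPowerSeries (Fin 3) ℂ := X 0
  set y : MvPowerSeries (Fin 3) ℂ := X 1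
  set z : MvPowerSeries (Fin 3) ℂ := X 2
  set I := Ideal.span {z + x + y, x ^ 2 + y ^ 2}
  set J := Ideal.span {z + x + y, x ^ 2 + 2 * y ^ 2}
  refine ⟨key_not_mem, fun hIC => key_not_mem (hIC _ ?_)⟩
  -- `(z+x+y)·x·y` is integral over `I*J`
  refine ⟨2, two_pos, fun i => if i = 2 then -(((z + x + y) * x * y) ^ 2) else 0, ?_, ?_⟩
  · intro i hi
    simp only [Finset.mem_Icc] at hi
    obtain ⟨hi1, hi2⟩ := hi
    interval_cases i
    · simp
    · simp only [if_pos rfl]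
      refine neg_mem ?_
      have hfI : z + x + y ∈ I := Ideal.subset_span (Set.mem_insert _ _)
      have hfJ : z + x + y ∈ J := Ideal.subset_span (Set.mem_insert _ _)
      have hg1 : x ^ 2 + y ^ 2 ∈ I := Ideal.subset_span (by simp)
      have hg2 : x ^ 2 + 2 * y ^ 2 ∈ J := Ideal.subset_span (by simp)
      have hq1 : (x ^ 2 + y ^ 2) * (z + x + y) ∈ I * J := Ideal.mul_mem_mul hg1 hfJ
      have hq2 : (z + x + y) * (x ^ 2 + 2 * y ^ 2) ∈ I * J := Ideal.mul_mem_mul hfI hg2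
      have hid : ((z + x + y) * x * y) ^ 2
          = (-2 : MvPowerSeries (Fin 3) ℂ) * (((x ^ 2 + y ^ 2) * (z + x + y))
              * ((x ^ 2 + y ^ 2) * (z + x + y)))
            + 3 * (((x ^ 2 + y ^ 2) * (z + x + y)) * ((z + x + y) * (x ^ 2 + 2 * y ^ 2)))
            + (-1 : MvPowerSeries (Fin 3) ℂ) * (((z + x + y) * (x ^ 2 + 2 * y ^ 2))
              * ((z + x + y) * (x ^ 2 + 2 * y ^ 2))) := by ring
      rw [hid, pow_two]
      exact add_mem (add_mem (Ideal.mul_mem_left _ _ (Ideal.mul_mem_mul hq1 hq1))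
          (Ideal.mul_mem_left _ _ (Ideal.mul_mem_mul hq1 hq2)))
        (Ideal.mul_mem_left _ _ (Ideal.mul_mem_mul hq2 hq2))
  · have h12 : Finset.Icc 1 2 = ({1, 2} : Finset ℕ) := rfl
    rw [h12]
    norm_num
    exact add_neg_cancel _
end

section
/- In ℂ[[x,y,z]], each of the ideals (z+x+y, x^2+y^2) and (z+x+y, x^2+2y^2) is integrally closed. -/
noncomputable section

namespace SubstAux

open MvPolynomial

variable {m k : ℕ}

/-- the constant finsupp -/
def constF (m N : ℕ) : Fin m →₀ ℕ := Finsupp.equivFunOnFinite.symm (fun _ => N)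

lemma constF_apply (i : Fin m) (N : ℕ) : constF m N i = N := rfl

lemma degree_add (a b : Fin m →₀ ℕ) : (a + b).degree = a.degree + b.degree := by
  simp only [Finsupp.degree_eq_weight_one, map_add]

/-- finset of exponents of total degree ≤ N -/
def expSet (m N : ℕ) : Finset (Fin m →₀ ℕ) :=
  (Finset.Iic (constF m N)).filter (fun e => e.degree ≤ N)

lemma mem_expSet {N : ℕ} {e : Fin m →₀ ℕ} : e ∈ expSet m N ↔ e.degree ≤ N := by
  simp only [expSet, Finset.mem_filter, Finset.mem_Iic, and_iff_right_iff_imp]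
  intro h
  intro i
  exact le_trans (Finsupp.le_degree i e) h

/-- truncation of a power series keeping all monomials of total degree ≤ N -/
def bigPart (N : ℕ) (f : MvPowerSeries (Fin m) ℂ) : MvPolynomial (Fin m) ℂ :=
  ∑ e ∈ expSet m N, monomial e (MvPowerSeries.coeff e f)

lemma coeff_bigPart (N : ℕ) (f : MvPowerSeries (Fin m) ℂ) (e : Fin m →₀ ℕ) :
    coeff e (bigPart N f) = if e.degree ≤ N then MvPowerSeries.coeff e f else 0 := by
  classical
  rw [bigPart, coeff_sum]
  by_cases h : e.degree ≤ N
  · rw [Finset.sum_eq_single e (fun b _ hb => by rw [coeff_monomial, if_neg hb])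
      (fun he => absurd (mem_expSet.2 h) he)]
    rw [coeff_monomial, if_pos rfl, if_pos h]
  · rw [if_neg h, Finset.sum_eq_zero]
    intro b hb
    rw [coeff_monomial, if_neg]
    intro hbe
    exact h (hbe ▸ (mem_expSet.1 hb))

lemma bigPart_add (N : ℕ) (f g : MvPowerSeries (Fin m) ℂ) :
    bigPart N (f + g) = bigPart N f + bigPart N g := by
  apply MvPolynomial.ext
  intro e
  simp [coeff_bigPart, map_add]
  split <;> simp

variable (L : Fin m → MvPolynomial (Fin k) ℂ)

/-- the degree-selection congruence lemma -/
lemma coeff_aeval_congr (hL : ∀ i, (L i).IsHomogeneous 1) {d : Fin k →₀ ℕ}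
    {p q : MvPolynomial (Fin m) ℂ}
    (h : ∀ e : Fin m →₀ ℕ, e.degree = d.degree → coeff e p = coeff e q) :
    coeff d (aeval L p) = coeff d (aeval L q) := by
  have key : ∀ r : MvPolynomial (Fin m) ℂ,
      (∀ e : Fin m →₀ ℕ, e.degree = d.degree → coeff e r = 0) →
      coeff d (aeval L r) = 0 := by
    intro r hr
    have hsum := sum_homogeneousComponent r
    calc coeff d (aeval L r)
        = coeff d (aeval L (∑ i ∈ Finset.range (r.totalDegree + 1),
            homogeneousComponent i r)) := by rw [hsum]
      _ = ∑ i ∈ Finset.range (r.totalDegree + 1),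
            coeff d (aeval L (homogeneousComponent i r)) := by
            rw [map_sum, coeff_sum]
      _ = 0 := by
        apply Finset.sum_eq_zero
        intro i _
        by_cases hi : i = d.degree
        · have : homogeneousComponent i r = 0 := by
            apply MvPolynomial.ext
            intro e
            rw [coeff_homogeneousComponent]
            split
            · next he => exact hr e (by omega)
            · simp
          rw [this, map_zero, coeff_zero]
        · have hhom : ((aeval L) (homogeneousComponent i r)).IsHomogeneous (1 * i) :=
            (homogeneousComponent_isHomogeneous i r).aeval L (fun j => hL j)
          exact hhom.coeff_eq_zero (by omega)
  have : coeff d (aeval L (p - q)) = 0 := by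
    apply key
    intro e he
    rw [coeff_sub, h e he, sub_self]
  rw [map_sub, coeff_sub] at this
  exact sub_eq_zero.mp this


variable {L} in
/-- the substitution of homogeneous linear forms into a power series -/
def substFun (f : MvPowerSeries (Fin m) ℂ) : MvPowerSeries (Fin k) ℂ :=
  fun d => coeff d (aeval L (bigPart d.degree f))

lemma coeff_substFun (f : MvPowerSeries (Fin m) ℂ) (d : Fin k →₀ ℕ) :
    MvPowerSeries.coeff d (substFun (L := L) f) = coeff d (aeval L (bigPart d.degree f)) :=
  rfl

/-- the workhorse: computing a coefficient of `substFun` via any polynomial that agrees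
with `f` in the relevant total degree. -/
lemma coeff_substFun_eq (hL : ∀ i, (L i).IsHomogeneous 1) (f : MvPowerSeries (Fin m) ℂ)
    (d : Fin k →₀ ℕ) (p : MvPolynomial (Fin m) ℂ)
    (hp : ∀ e : Fin m →₀ ℕ, e.degree = d.degree → coeff e p = MvPowerSeries.coeff e f) :
    MvPowerSeries.coeff d (substFun (L := L) f) = coeff d (aeval L p) := by
  rw [coeff_substFun]
  apply coeff_aeval_congr L hL
  intro e he
  rw [coeff_bigPart, if_pos (le_of_eq he), hp e he]

lemma substFun_one (hL : ∀ i, (L i).IsHomogeneous 1) :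
    substFun (L := L) (1 : MvPowerSeries (Fin m) ℂ) = 1 := by
  apply MvPowerSeries.ext
  intro d
  classical
  rw [coeff_substFun_eq L hL 1 d 1 (fun e _ => by
    simp [MvPolynomial.coeff_one, MvPowerSeries.coeff_one, eq_comm])]
  simp [MvPolynomial.coeff_one, MvPowerSeries.coeff_one, eq_comm]

lemma substFun_add (hL : ∀ i, (L i).IsHomogeneous 1) (f g : MvPowerSeries (Fin m) ℂ) :
    substFun (L := L) (f + g) = substFun (L := L) f + substFun (L := L) g := by
  apply MvPowerSeries.ext
  intro d
  rw [map_add, coeff_substFun, coeff_substFun, coeff_substFun, bigPart_add, map_add, coeff_add]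

lemma substFun_mul (hL : ∀ i, (L i).IsHomogeneous 1) (f g : MvPowerSeries (Fin m) ℂ) :
    substFun (L := L) (f * g) = substFun (L := L) f * substFun (L := L) g := by
  classical
  apply MvPowerSeries.ext
  intro d
  set N := d.degree with hN
  have key : MvPowerSeries.coeff d (substFun (L := L) (f * g))
      = coeff d (aeval L (bigPart N f * bigPart N g)) := by
    apply coeff_substFun_eq L hL
    intro e he
    rw [coeff_mul, MvPowerSeries.coeff_mul]
    apply Finset.sum_congr rfl
    intro x hx
    rw [Finset.HasAntidiagonal.mem_antidiagonal] at hx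
    have hda : (x.1 + x.2).degree = x.1.degree + x.2.degree := degree_add _ _
    rw [hx, he] at hda
    have h1 : (x.1).degree ≤ N := by omega
    have h2 : (x.2).degree ≤ N := by omega
    rw [coeff_bigPart, if_pos h1, coeff_bigPart, if_pos h2]
  rw [key, map_mul, coeff_mul, MvPowerSeries.coeff_mul]
  apply Finset.sum_congr rfl
  intro x hx
  rw [Finset.HasAntidiagonal.mem_antidiagonal] at hx
  have hda : (x.1 + x.2).degree = x.1.degree + x.2.degree := degree_add _ _
  rw [hx] at hda
  have h1 : (x.1).degree ≤ N := by omega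
  have h2 : (x.2).degree ≤ N := by omega
  rw [coeff_substFun_eq L hL f x.1 (bigPart N f)
      (fun e he => by rw [coeff_bigPart, if_pos (by omega : e.degree ≤ N)]),
    coeff_substFun_eq L hL g x.2 (bigPart N g)
      (fun e he => by rw [coeff_bigPart, if_pos (by omega : e.degree ≤ N)])]

/-- substitution on (coercions of) polynomials is `aeval`. -/
lemma substFun_coe (hL : ∀ i, (L i).IsHomogeneous 1) (p : MvPolynomial (Fin m) ℂ) :
    substFun (L := L) (p : MvPowerSeries (Fin m) ℂ) = ((aeval L p : MvPolynomial (Fin k) ℂ) :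
      MvPowerSeries (Fin k) ℂ) := by
  apply MvPowerSeries.ext
  intro d
  rw [coeff_substFun_eq L hL ((p : MvPowerSeries (Fin m) ℂ)) d p (fun e _ => rfl), MvPolynomial.coeff_coe]

/-- the bundled ring homomorphism. -/
def substHom (hL : ∀ i, (L i).IsHomogeneous 1) :
    MvPowerSeries (Fin m) ℂ →+* MvPowerSeries (Fin k) ℂ where
  toFun := substFun (L := L)
  map_one' := substFun_one L hL
  map_mul' := substFun_mul L hL
  map_zero' := by
    apply MvPowerSeries.ext
    intro d
    rw [coeff_substFun_eq L hL 0 d 0 (fun e _ => by simp)]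
    simp
  map_add' := substFun_add L hL

lemma substHom_apply (hL : ∀ i, (L i).IsHomogeneous 1) (f : MvPowerSeries (Fin m) ℂ) :
    substHom L hL f = substFun (L := L) f := rfl

/-- identity substitution -/
lemma substFun_X (f : MvPowerSeries (Fin m) ℂ) :
    substFun (L := fun i => (X i : MvPolynomial (Fin m) ℂ)) f = f := by
  apply MvPowerSeries.ext
  intro d
  rw [coeff_substFun]
  have : aeval (fun i => (X i : MvPolynomial (Fin m) ℂ)) (bigPart d.degree f)
      = bigPart d.degree f := by
    have := congrFun (congrArg (fun (φ : MvPolynomial (Fin m) ℂ →ₐ[ℂ] MvPolynomial (Fin m) ℂ)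
      => (φ : MvPolynomial (Fin m) ℂ → MvPolynomial (Fin m) ℂ)) (aeval_X_left (R := ℂ)
      (σ := Fin m))) (bigPart d.degree f)
    simpa using this
  rw [this, coeff_bigPart, if_pos le_rfl]

/-- composition of substitutions -/
lemma substFun_comp {j : ℕ} (M : Fin k → MvPolynomial (Fin j) ℂ)
    (hL : ∀ i, (L i).IsHomogeneous 1) (hM : ∀ i, (M i).IsHomogeneous 1)
    (f : MvPowerSeries (Fin m) ℂ) :
    substFun (L := M) (substFun (L := L) f)
      = substFun (L := fun i => aeval M (L i)) f := by
  apply MvPowerSeries.ext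
  intro d
  set N := d.degree with hN
  rw [coeff_substFun_eq M hM (substFun (L := L) f) d (aeval L (bigPart N f)) (fun e he => by
    rw [coeff_substFun, he, ← hN])]
  exact congrArg (coeff d) (AlgHom.congr_fun (comp_aeval L (aeval M)) (bigPart N f))

/-! ### Projections that kill a set of variables -/

/-- the linear forms keeping the variables in `S` and killing the rest. -/
def selForms (m : ℕ) (S : Finset (Fin m)) : Fin m → MvPolynomial (Fin m) ℂ :=
  fun i => if i ∈ S then X i else 0

lemma selForms_homog (S : Finset (Fin m)) : ∀ i, ((selForms m S) i).IsHomogeneous 1 := by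
  intro i
  rw [selForms]
  split
  · exact isHomogeneous_X _ _
  · exact isHomogeneous_zero _ _ _

lemma aeval_selForms (S : Finset (Fin m)) (e : Fin m →₀ ℕ) (c : ℂ) :
    aeval (selForms m S) (monomial e c) =
      if (∀ i, i ∉ S → e i = 0) then monomial e c else 0 := by
  classical
  rw [aeval_monomial]
  by_cases h : ∀ i, i ∉ S → e i = 0
  · rw [if_pos h]
    have : (e.prod fun i k => (selForms m S) i ^ k) = e.prod fun i k => (X i) ^ k := by
      apply Finsupp.prod_congr
      intro i hi
      have : i ∈ S := by
        by_contra hiS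
        exact (Finsupp.mem_support_iff.1 hi) (h i hiS)
      rw [selForms, if_pos this]
    rw [this, monomial_eq, algebraMap_eq]
  · rw [if_neg h]
    push_neg at h
    obtain ⟨i, hiS, hie⟩ := h
    have hmem : i ∈ e.support := Finsupp.mem_support_iff.2 hie
    rw [Finsupp.prod, Finset.prod_eq_zero hmem (by
      rw [selForms, if_neg hiS]
      exact zero_pow hie)]
    rw [mul_zero]

lemma coeff_aeval_selForms (S : Finset (Fin m)) (p : MvPolynomial (Fin m) ℂ) (d : Fin m →₀ ℕ) :
    coeff d (aeval (selForms m S) p) = if (∀ i, i ∉ S → d i = 0) then coeff d p else 0 := by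
  classical
  conv_lhs => rw [p.as_sum, map_sum]
  rw [coeff_sum]
  have hterm : ∀ e ∈ p.support,
      coeff d (aeval (selForms m S) (monomial e (coeff e p)))
        = if e = d then (if (∀ i, i ∉ S → d i = 0) then coeff d p else 0) else 0 := by
    intro e _
    rw [aeval_selForms]
    by_cases hed : e = d
    · subst hed
      rw [if_pos rfl]
      split
      · rw [coeff_monomial, if_pos rfl]
      · rw [coeff_zero]
    · rw [if_neg hed]
      split
      · rw [coeff_monomial, if_neg hed]
      · rw [coeff_zero]
  rw [Finset.sum_congr rfl hterm]
  by_cases hd : d ∈ p.support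
  · rw [Finset.sum_ite_eq' p.support d (fun _ => _), if_pos hd]
  · rw [Finset.sum_ite_eq' p.support d (fun _ => _), if_neg hd]
    rw [notMem_support_iff.1 hd]
    split <;> simp

/-- the coefficient formula for the killing projection on power series. -/
lemma coeff_substFun_selForms (S : Finset (Fin m)) (f : MvPowerSeries (Fin m) ℂ)
    (d : Fin m →₀ ℕ) :
    MvPowerSeries.coeff d (substFun (L := selForms m S) f)
      = if (∀ i, i ∉ S → d i = 0) then MvPowerSeries.coeff d f else 0 := by
  rw [coeff_substFun, coeff_aeval_selForms, coeff_bigPart]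
  rw [if_pos le_rfl]

/-! ### The model ideal `(z, x*y)` in three variables -/

lemma substFun_sel_X {S : Finset (Fin 3)} {i : Fin 3} (h : i ∉ S) :
    substFun (L := selForms 3 S) (MvPowerSeries.X i : MvPowerSeries (Fin 3) ℂ) = 0 := by
  rw [show (MvPowerSeries.X i : MvPowerSeries (Fin 3) ℂ) = ((X i : MvPolynomial (Fin 3) ℂ) :
      MvPowerSeries (Fin 3) ℂ) from (MvPolynomial.coe_X i).symm,
    substFun_coe _ (selForms_homog _), aeval_X, selForms, if_neg h]
  exact MvPolynomial.coe_zero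

lemma substFun_sel_X_mem {S : Finset (Fin 3)} {i : Fin 3} (h : i ∈ S) :
    substFun (L := selForms 3 S) (MvPowerSeries.X i : MvPowerSeries (Fin 3) ℂ)
      = MvPowerSeries.X i := by
  rw [show (MvPowerSeries.X i : MvPowerSeries (Fin 3) ℂ) = ((X i : MvPolynomial (Fin 3) ℂ) :
      MvPowerSeries (Fin 3) ℂ) from (MvPolynomial.coe_X i).symm,
    substFun_coe _ (selForms_homog _), aeval_X, selForms, if_pos h]

/-- membership in the span of two variables, via the projection killing them. -/
lemma mem_span_two_vars (i j kk : Fin 3) (hij : i ≠ j) (hik : i ≠ kk) (hjk : j ≠ kk)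
    (f : MvPowerSeries (Fin 3) ℂ) :
    f ∈ Ideal.span {(MvPowerSeries.X i : MvPowerSeries (Fin 3) ℂ), MvPowerSeries.X j} ↔
      substFun (L := selForms 3 {kk}) f = 0 := by
  classical
  have hcover : ∀ t : Fin 3, t = i ∨ t = j ∨ t = kk := by
    have : ∀ (a b c : Fin 3), a ≠ b → a ≠ c → b ≠ c → ∀ t, t = a ∨ t = b ∨ t = c := by decide
    exact this i j kk hij hik hjk
  constructor
  · intro hf
    rw [Ideal.mem_span_pair] at hf
    obtain ⟨u, v, huv⟩ := hf
    have hi : i ∉ ({kk} : Finset (Fin 3)) := by simp [hik]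
    have hj : j ∉ ({kk} : Finset (Fin 3)) := by simp [hjk]
    have h2 := congrArg (substHom (selForms 3 {kk}) (selForms_homog _)) huv
    rw [map_add, map_mul, map_mul] at h2
    simp only [substHom_apply] at h2
    rw [substFun_sel_X hi, substFun_sel_X hj, mul_zero, mul_zero, add_zero] at h2
    exact h2.symm
  · intro hf
    -- peel off variable i, then variable j
    have hdvd1 : (MvPowerSeries.X i : MvPowerSeries (Fin 3) ℂ)
        ∣ f - substFun (L := selForms 3 ({j, kk} : Finset (Fin 3))) f := by
      rw [MvPowerSeries.X_dvd_iff]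
      intro d hd
      rw [map_sub, coeff_substFun_selForms, if_pos, sub_self]
      intro t ht
      rcases hcover t with rfl | rfl | rfl
      · exact hd
      · simp at ht
      · simp at ht
    have hdvd2 : (MvPowerSeries.X j : MvPowerSeries (Fin 3) ℂ)
        ∣ substFun (L := selForms 3 ({j, kk} : Finset (Fin 3))) f
          - substFun (L := selForms 3 ({kk} : Finset (Fin 3))) f := by
      rw [MvPowerSeries.X_dvd_iff]
      intro d hd
      rw [map_sub, coeff_substFun_selForms, coeff_substFun_selForms]
      by_cases hcond : ∀ t : Fin 3, t ∉ ({kk} : Finset (Fin 3)) → d t = 0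
      · rw [if_pos hcond, if_pos, sub_self]
        intro t ht
        exact hcond t (by simp at ht ⊢; tauto)
      · rw [if_neg hcond, if_neg, sub_self]
        intro hcond2
        apply hcond
        intro t ht
        rcases hcover t with rfl | rfl | rfl
        · exact hcond2 t (by
            simp only [Finset.mem_insert, Finset.mem_singleton]
            push_neg
            exact ⟨hij, hik⟩)
        · exact hd
        · simp at ht
    obtain ⟨a, ha⟩ := hdvd1
    obtain ⟨b, hb⟩ := hdvd2
    rw [Ideal.mem_span_pair]
    refine ⟨a, b, ?_⟩
    linear_combination -ha - hb - hf

lemma X_ne_zero' (i : Fin 3) : (MvPowerSeries.X i : MvPowerSeries (Fin 3) ℂ) ≠ 0 := by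
  intro h
  have := congrArg (MvPowerSeries.coeff (Finsupp.single i 1)) h
  rw [MvPowerSeries.coeff_index_single_self_X, MvPowerSeries.coeff_zero] at this
  exact one_ne_zero this

/-- the primes -/
lemma span_two_vars_isPrime (i j kk : Fin 3) (hij : i ≠ j) (hik : i ≠ kk) (hjk : j ≠ kk) :
    (Ideal.span {(MvPowerSeries.X i : MvPowerSeries (Fin 3) ℂ), MvPowerSeries.X j}).IsPrime := by
  haveI : IsDomain (MvPowerSeries (Fin 3) ℂ) := NoZeroDivisors.to_isDomain _
  have : Ideal.span {(MvPowerSeries.X i : MvPowerSeries (Fin 3) ℂ), MvPowerSeries.X j}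
      = RingHom.ker (substHom (selForms 3 {kk}) (selForms_homog _)) := by
    ext f
    rw [RingHom.mem_ker, substHom_apply, mem_span_two_vars i j kk hij hik hjk]
  rw [this]
  exact RingHom.ker_isPrime _

/-- the model ideal -/
def Kmodel : Ideal (MvPowerSeries (Fin 3) ℂ) :=
  Ideal.span {(MvPowerSeries.X 2 : MvPowerSeries (Fin 3) ℂ),
    MvPowerSeries.X 0 * MvPowerSeries.X 1}

lemma Kmodel_radical {f : MvPowerSeries (Fin 3) ℂ} {n : ℕ} (hf : f ^ n ∈ Kmodel) : f ∈ Kmodel := by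
  have hP1 : (Ideal.span {(MvPowerSeries.X 2 : MvPowerSeries (Fin 3) ℂ),
      MvPowerSeries.X 0}).IsPrime := span_two_vars_isPrime 2 0 1 (by decide) (by decide) (by decide)
  have hP2 : (Ideal.span {(MvPowerSeries.X 2 : MvPowerSeries (Fin 3) ℂ),
      MvPowerSeries.X 1}).IsPrime := span_two_vars_isPrime 2 1 0 (by decide) (by decide) (by decide)
  have hX2P1 : (MvPowerSeries.X 2 : MvPowerSeries (Fin 3) ℂ) ∈ Ideal.span
      {(MvPowerSeries.X 2 : MvPowerSeries (Fin 3) ℂ), MvPowerSeries.X 0} :=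
    Ideal.subset_span (by simp)
  have hX0P1 : (MvPowerSeries.X 0 : MvPowerSeries (Fin 3) ℂ) ∈ Ideal.span
      {(MvPowerSeries.X 2 : MvPowerSeries (Fin 3) ℂ), MvPowerSeries.X 0} :=
    Ideal.subset_span (by simp)
  have hX2P2 : (MvPowerSeries.X 2 : MvPowerSeries (Fin 3) ℂ) ∈ Ideal.span
      {(MvPowerSeries.X 2 : MvPowerSeries (Fin 3) ℂ), MvPowerSeries.X 1} :=
    Ideal.subset_span (by simp)
  have hX1P2 : (MvPowerSeries.X 1 : MvPowerSeries (Fin 3) ℂ) ∈ Ideal.span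
      {(MvPowerSeries.X 2 : MvPowerSeries (Fin 3) ℂ), MvPowerSeries.X 1} :=
    Ideal.subset_span (by simp)
  have hKP1 : Kmodel ≤ Ideal.span {(MvPowerSeries.X 2 : MvPowerSeries (Fin 3) ℂ),
      MvPowerSeries.X 0} := by
    rw [Kmodel, Ideal.span_le]
    rintro g hg
    simp only [Set.mem_insert_iff, Set.mem_singleton_iff] at hg
    rcases hg with rfl | rfl
    · exact hX2P1
    · exact Ideal.mul_mem_right _ _ hX0P1
  have hKP2 : Kmodel ≤ Ideal.span {(MvPowerSeries.X 2 : MvPowerSeries (Fin 3) ℂ),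
      MvPowerSeries.X 1} := by
    rw [Kmodel, Ideal.span_le]
    rintro g hg
    simp only [Set.mem_insert_iff, Set.mem_singleton_iff] at hg
    rcases hg with rfl | rfl
    · exact hX2P2
    · exact Ideal.mul_mem_left _ _ hX1P2
  have hf1 : f ∈ Ideal.span {(MvPowerSeries.X 2 : MvPowerSeries (Fin 3) ℂ), MvPowerSeries.X 0} :=
    hP1.mem_of_pow_mem n (hKP1 hf)
  have hf2 : f ∈ Ideal.span {(MvPowerSeries.X 2 : MvPowerSeries (Fin 3) ℂ), MvPowerSeries.X 1} :=
    hP2.mem_of_pow_mem n (hKP2 hf)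
  rw [Ideal.mem_span_pair] at hf1
  obtain ⟨u, v, huv⟩ := hf1
  have hvX0 : v * MvPowerSeries.X 0 ∈ Ideal.span
      {(MvPowerSeries.X 2 : MvPowerSeries (Fin 3) ℂ), MvPowerSeries.X 1} := by
    have : v * MvPowerSeries.X 0 = f - u * MvPowerSeries.X 2 := by rw [← huv]; ring
    rw [this]
    exact Ideal.sub_mem _ hf2 (Ideal.mul_mem_left _ _ hX2P2)
  have hX0notP2 : (MvPowerSeries.X 0 : MvPowerSeries (Fin 3) ℂ) ∉ Ideal.span
      {(MvPowerSeries.X 2 : MvPowerSeries (Fin 3) ℂ), MvPowerSeries.X 1} := by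
    rw [mem_span_two_vars 2 1 0 (by decide) (by decide) (by decide)]
    rw [substFun_sel_X_mem (by simp)]
    exact X_ne_zero' 0
  have hv : v ∈ Ideal.span {(MvPowerSeries.X 2 : MvPowerSeries (Fin 3) ℂ), MvPowerSeries.X 1} :=
    ((hP2.mem_or_mem hvX0).resolve_right hX0notP2)
  rw [Ideal.mem_span_pair] at hv
  obtain ⟨c, dd, hcd⟩ := hv
  rw [Kmodel, Ideal.mem_span_pair]
  refine ⟨u + c * MvPowerSeries.X 0, dd, ?_⟩
  rw [← huv, ← hcd]
  ring

/-! ### The linear change of variables, parametrized by `s` -/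

variable (s : ℂ)

/-- forms of the inverse substitution: `x ↦ x + s y`, `y ↦ x - s y`, `z ↦ z + x + y`. -/
def Mforms : Fin 3 → MvPolynomial (Fin 3) ℂ :=
  ![X 0 + C s * X 1, X 0 - C s * X 1, X 2 + X 0 + X 1]

/-- forms of the direct substitution -/
def Lforms : Fin 3 → MvPolynomial (Fin 3) ℂ :=
  ![C (1/2) * X 0 + C (1/2) * X 1,
    C (1/(2*s)) * X 0 - C (1/(2*s)) * X 1,
    X 2 + C ((-1 - 1/s)/2) * X 0 + C ((-1 + 1/s)/2) * X 1]

lemma homog_C_mul_X (a : ℂ) (i : Fin 3) :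
    ((C a * X i : MvPolynomial (Fin 3) ℂ)).IsHomogeneous 1 := by
  rw [← smul_eq_C_mul]
  exact (mem_homogeneousSubmodule _ _).1
    ((homogeneousSubmodule (Fin 3) ℂ 1).smul_mem a
      ((mem_homogeneousSubmodule _ _).2 (isHomogeneous_X _ i)))

lemma Mforms_homog : ∀ i, ((Mforms s) i).IsHomogeneous 1 := by
  intro i
  fin_cases i
  · show ((Mforms s) 0).IsHomogeneous 1
    rw [show (Mforms s) 0 = X 0 + C s * X 1 from rfl]
    exact (isHomogeneous_X _ 0).add (homog_C_mul_X s 1)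
  · show ((Mforms s) 1).IsHomogeneous 1
    rw [show (Mforms s) 1 = X 0 - C s * X 1 from rfl]
    exact (isHomogeneous_X _ 0).sub (homog_C_mul_X s 1)
  · show ((Mforms s) 2).IsHomogeneous 1
    rw [show (Mforms s) 2 = X 2 + X 0 + X 1 from rfl]
    exact ((isHomogeneous_X _ 2).add (isHomogeneous_X _ 0)).add (isHomogeneous_X _ 1)

lemma Lforms_homog : ∀ i, ((Lforms s) i).IsHomogeneous 1 := by
  intro i
  fin_cases i
  · show ((Lforms s) 0).IsHomogeneous 1
    rw [show (Lforms s) 0 = C (1/2) * X 0 + C (1/2) * X 1 from rfl]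
    exact (homog_C_mul_X _ 0).add (homog_C_mul_X _ 1)
  · show ((Lforms s) 1).IsHomogeneous 1
    rw [show (Lforms s) 1 = C (1/(2*s)) * X 0 - C (1/(2*s)) * X 1 from rfl]
    exact (homog_C_mul_X _ 0).sub (homog_C_mul_X _ 1)
  · show ((Lforms s) 2).IsHomogeneous 1
    rw [show (Lforms s) 2 = X 2 + C ((-1 - 1/s)/2) * X 0 + C ((-1 + 1/s)/2) * X 1 from rfl]
    exact ((isHomogeneous_X _ 2).add (homog_C_mul_X _ 0)).add (homog_C_mul_X _ 1)

/-- composing gives the identity -/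
lemma ML_comp (hs : s ≠ 0) :
    ∀ i, aeval (Mforms s) ((Lforms s) i) = (X i : MvPolynomial (Fin 3) ℂ) := by
  intro i
  fin_cases i
  · show aeval (Mforms s) ((Lforms s) 0) = (X 0 : MvPolynomial (Fin 3) ℂ)
    rw [show (Lforms s) 0 = C (1/2) * X 0 + C (1/2) * X 1 from rfl]
    simp only [map_add, map_mul, aeval_C, aeval_X, algebraMap_eq]
    rw [show (Mforms s) 0 = X 0 + C s * X 1 from rfl,
      show (Mforms s) 1 = X 0 - C s * X 1 from rfl]
    have h1 : C (1/2 : ℂ) + C (1/2 : ℂ) = (1 : MvPolynomial (Fin 3) ℂ) := by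
      rw [show (1 : MvPolynomial (Fin 3) ℂ) = C 1 from (map_one _).symm]
      simp only [← map_add]
      norm_num
    linear_combination (X 0 : MvPolynomial (Fin 3) ℂ) * h1
  · show aeval (Mforms s) ((Lforms s) 1) = (X 1 : MvPolynomial (Fin 3) ℂ)
    rw [show (Lforms s) 1 = C (1/(2*s)) * X 0 - C (1/(2*s)) * X 1 from rfl]
    simp only [map_sub, map_mul, aeval_C, aeval_X, algebraMap_eq]
    rw [show (Mforms s) 0 = X 0 + C s * X 1 from rfl,
      show (Mforms s) 1 = X 0 - C s * X 1 from rfl]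
    have h2 : C (1/(2*s) : ℂ) * C s + C (1/(2*s) : ℂ) * C s = (1 : MvPolynomial (Fin 3) ℂ) := by
      rw [show (1 : MvPolynomial (Fin 3) ℂ) = C 1 from (map_one _).symm]
      simp only [← map_mul, ← map_add]
      congr 1
      field_simp
      ring
    linear_combination (X 1 : MvPolynomial (Fin 3) ℂ) * h2
  · show aeval (Mforms s) ((Lforms s) 2) = (X 2 : MvPolynomial (Fin 3) ℂ)
    rw [show (Lforms s) 2 = X 2 + C ((-1 - 1/s)/2) * X 0 + C ((-1 + 1/s)/2) * X 1 from rfl]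
    simp only [map_add, map_mul, aeval_C, aeval_X, algebraMap_eq]
    rw [show (Mforms s) 0 = X 0 + C s * X 1 from rfl,
      show (Mforms s) 1 = X 0 - C s * X 1 from rfl,
      show (Mforms s) 2 = X 2 + X 0 + X 1 from rfl]
    have h1 : (1 : MvPolynomial (Fin 3) ℂ) + C ((-1 - 1/s)/2 : ℂ) + C ((-1 + 1/s)/2 : ℂ)
        = (0 : MvPolynomial (Fin 3) ℂ) := by
      have : C ((1:ℂ) + (-1 - 1/s)/2 + (-1 + 1/s)/2) = (C 0 : MvPolynomial (Fin 3) ℂ) := by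
        congr 1
        field_simp
        ring
      simpa [map_add] using this
    have h2 : (1 : MvPolynomial (Fin 3) ℂ) + C ((-1 - 1/s)/2 : ℂ) * C s
        - C ((-1 + 1/s)/2 : ℂ) * C s = (0 : MvPolynomial (Fin 3) ℂ) := by
      have : C ((1:ℂ) + ((-1 - 1/s)/2) * s - ((-1 + 1/s)/2) * s)
          = (C 0 : MvPolynomial (Fin 3) ℂ) := by
        congr 1
        field_simp
        ring
      simpa [map_add, map_sub, map_mul] using this
    linear_combination (X 0 : MvPolynomial (Fin 3) ℂ) * h1 + (X 1 : MvPolynomial (Fin 3) ℂ) * h2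

/-- image of `z + x + y` under the direct substitution -/
lemma L_g (hs : s ≠ 0) : aeval (Lforms s) ((X 2 + X 0 + X 1 : MvPolynomial (Fin 3) ℂ))
    = (X 2 : MvPolynomial (Fin 3) ℂ) := by
  simp only [map_add, aeval_X]
  rw [show (Lforms s) 0 = C (1/2) * X 0 + C (1/2) * X 1 from rfl,
    show (Lforms s) 1 = C (1/(2*s)) * X 0 - C (1/(2*s)) * X 1 from rfl,
    show (Lforms s) 2 = X 2 + C ((-1 - 1/s)/2) * X 0 + C ((-1 + 1/s)/2) * X 1 from rfl]
  have h1 : C ((-1 - 1/s)/2 : ℂ) + C (1/2 : ℂ) + C (1/(2*s) : ℂ)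
      = (0 : MvPolynomial (Fin 3) ℂ) := by
    rw [show (0 : MvPolynomial (Fin 3) ℂ) = C 0 from (map_zero _).symm]
    simp only [← map_add]
    congr 1
    field_simp
    ring
  have h2 : C ((-1 + 1/s)/2 : ℂ) + C (1/2 : ℂ) - C (1/(2*s) : ℂ)
      = (0 : MvPolynomial (Fin 3) ℂ) := by
    rw [show (0 : MvPolynomial (Fin 3) ℂ) = C 0 from (map_zero _).symm]
    simp only [← map_add, ← map_sub]
    congr 1
    field_simp
    ring
  linear_combination (X 0 : MvPolynomial (Fin 3) ℂ) * h1 + (X 1 : MvPolynomial (Fin 3) ℂ) * h2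

/-- image of the quadric under the direct substitution -/
lemma L_q (hs : s ≠ 0) :
    aeval (Lforms s) ((X 0 ^ 2 - C (s^2) * X 1 ^ 2 : MvPolynomial (Fin 3) ℂ))
    = (X 0 * X 1 : MvPolynomial (Fin 3) ℂ) := by
  simp only [map_sub, map_mul, map_pow, aeval_C, aeval_X, algebraMap_eq]
  rw [show (Lforms s) 0 = C (1/2) * X 0 + C (1/2) * X 1 from rfl,
    show (Lforms s) 1 = C (1/(2*s)) * X 0 - C (1/(2*s)) * X 1 from rfl]
  have hA : C (1/2 : ℂ) * C (1/2 : ℂ) - (C s * C s) * (C (1/(2*s) : ℂ) * C (1/(2*s) : ℂ))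
      = (0 : MvPolynomial (Fin 3) ℂ) := by
    rw [show (0 : MvPolynomial (Fin 3) ℂ) = C 0 from (map_zero _).symm]
    simp only [← map_mul, ← map_sub]
    congr 1
    field_simp
    ring
  have hB : C (1/2 : ℂ) * C (1/2 : ℂ) + C (1/2 : ℂ) * C (1/2 : ℂ)
      + (C s * C s) * (C (1/(2*s) : ℂ) * C (1/(2*s) : ℂ))
      + (C s * C s) * (C (1/(2*s) : ℂ) * C (1/(2*s) : ℂ)) = (1 : MvPolynomial (Fin 3) ℂ) := by
    rw [show (1 : MvPolynomial (Fin 3) ℂ) = C 1 from (map_one _).symm]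
    simp only [← map_mul, ← map_add]
    congr 1
    field_simp
    ring
  linear_combination (X 0 : MvPolynomial (Fin 3) ℂ)^2 * hA + (X 1 : MvPolynomial (Fin 3) ℂ)^2 * hA
    + (X 0 * X 1 : MvPolynomial (Fin 3) ℂ) * hB

/-- product of the two linear factors -/
lemma M_prod :
    (Mforms s 0) * (Mforms s 1) = (X 0 ^ 2 - C (s^2) * X 1 ^ 2 : MvPolynomial (Fin 3) ℂ) := by
  rw [show (Mforms s) 0 = X 0 + C s * X 1 from rfl,
    show (Mforms s) 1 = X 0 - C s * X 1 from rfl,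
    show (C (s^2) : MvPolynomial (Fin 3) ℂ) = C s * C s by rw [← map_mul, ← pow_two]]
  ring

/-! ### Transfer to the ideals in question -/

/-- the linear generator, as a power series -/
def gS : MvPowerSeries (Fin 3) ℂ := MvPowerSeries.X 2 + MvPowerSeries.X 0 + MvPowerSeries.X 1

/-- the quadratic generator, as a power series -/
def qS (s : ℂ) : MvPowerSeries (Fin 3) ℂ :=
  MvPowerSeries.X 0 ^ 2 - MvPowerSeries.C (s^2) * MvPowerSeries.X 1 ^ 2

lemma gS_coe : gS = ((X 2 + X 0 + X 1 : MvPolynomial (Fin 3) ℂ) : MvPowerSeries (Fin 3) ℂ) := by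
  rw [gS]
  push_cast
  rfl

lemma qS_coe (s : ℂ) : qS s = ((X 0 ^ 2 - C (s^2) * X 1 ^ 2 : MvPolynomial (Fin 3) ℂ) :
    MvPowerSeries (Fin 3) ℂ) := by
  rw [qS, show ((X 0 ^ 2 - C (s^2) * X 1 ^ 2 : MvPolynomial (Fin 3) ℂ) :
      MvPowerSeries (Fin 3) ℂ) = MvPolynomial.coeToMvPowerSeries.ringHom
        (X 0 ^ 2 - C (s^2) * X 1 ^ 2 : MvPolynomial (Fin 3) ℂ) from rfl]
  rw [map_sub, map_mul, map_pow, map_pow]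
  simp only [MvPolynomial.coeToMvPowerSeries.ringHom_apply, MvPolynomial.coe_pow,
    MvPolynomial.coe_X, MvPolynomial.coe_C]
  rw [map_pow]

lemma sigma_g (s : ℂ) (hs : s ≠ 0) :
    substFun (L := Lforms s) gS = MvPowerSeries.X 2 := by
  rw [gS_coe, substFun_coe _ (Lforms_homog s), L_g s hs, MvPolynomial.coe_X]

lemma sigma_q (s : ℂ) (hs : s ≠ 0) :
    substFun (L := Lforms s) (qS s) = MvPowerSeries.X 0 * MvPowerSeries.X 1 := by
  rw [qS_coe, substFun_coe _ (Lforms_homog s), L_q s hs, MvPolynomial.coe_mul,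
    MvPolynomial.coe_X, MvPolynomial.coe_X]

lemma tau_z (s : ℂ) :
    substFun (L := Mforms s) (MvPowerSeries.X 2 : MvPowerSeries (Fin 3) ℂ) = gS := by
  rw [show (MvPowerSeries.X 2 : MvPowerSeries (Fin 3) ℂ)
      = ((X 2 : MvPolynomial (Fin 3) ℂ) : MvPowerSeries (Fin 3) ℂ) from
        (MvPolynomial.coe_X 2).symm,
    substFun_coe _ (Mforms_homog s), aeval_X, show Mforms s 2 = X 2 + X 0 + X 1 from rfl,
    ← gS_coe]

lemma tau_xy (s : ℂ) :
    substFun (L := Mforms s)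
      (MvPowerSeries.X 0 * MvPowerSeries.X 1 : MvPowerSeries (Fin 3) ℂ) = qS s := by
  rw [show (MvPowerSeries.X 0 * MvPowerSeries.X 1 : MvPowerSeries (Fin 3) ℂ)
      = ((X 0 * X 1 : MvPolynomial (Fin 3) ℂ) : MvPowerSeries (Fin 3) ℂ) by push_cast; rfl,
    substFun_coe _ (Mforms_homog s), map_mul, aeval_X, aeval_X, M_prod s, ← qS_coe]

lemma tau_sigma (s : ℂ) (hs : s ≠ 0) (f : MvPowerSeries (Fin 3) ℂ) :
    substFun (L := Mforms s) (substFun (L := Lforms s) f) = f := by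
  rw [substFun_comp (Lforms s) (Mforms s) (Lforms_homog s) (Mforms_homog s) f]
  have hXX : (fun i => aeval (Mforms s) (Lforms s i))
      = fun i => (X i : MvPolynomial (Fin 3) ℂ) := funext (ML_comp s hs)
  rw [hXX, substFun_X]

/-- the parametrized ideal -/
def Jideal (s : ℂ) : Ideal (MvPowerSeries (Fin 3) ℂ) := Ideal.span {gS, qS s}

lemma J_mem_iff (s : ℂ) (hs : s ≠ 0) (f : MvPowerSeries (Fin 3) ℂ) :
    f ∈ Jideal s ↔ substFun (L := Lforms s) f ∈ Kmodel := by
  constructor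
  · intro hf
    rw [Jideal, Ideal.mem_span_pair] at hf
    obtain ⟨u, v, huv⟩ := hf
    have h := congrArg (substHom (Lforms s) (Lforms_homog s)) huv
    rw [map_add, map_mul, map_mul] at h
    simp only [substHom_apply] at h
    rw [sigma_g s hs, sigma_q s hs] at h
    rw [Kmodel, Ideal.mem_span_pair]
    exact ⟨substFun (L := Lforms s) u, substFun (L := Lforms s) v, h⟩
  · intro hf
    rw [Kmodel, Ideal.mem_span_pair] at hf
    obtain ⟨U, V, hUV⟩ := hf
    have h := congrArg (substHom (Mforms s) (Mforms_homog s)) hUV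
    rw [map_add, map_mul, map_mul] at h
    simp only [substHom_apply] at h
    rw [tau_z s, tau_xy s, tau_sigma s hs] at h
    rw [Jideal, Ideal.mem_span_pair]
    exact ⟨substFun (L := Mforms s) U, substFun (L := Mforms s) V, h⟩

lemma J_radical (s : ℂ) (hs : s ≠ 0) {f : MvPowerSeries (Fin 3) ℂ} {n : ℕ}
    (hf : f ^ n ∈ Jideal s) : f ∈ Jideal s := by
  rw [J_mem_iff s hs] at hf ⊢
  have : substFun (L := Lforms s) (f ^ n) = (substFun (L := Lforms s) f) ^ n := by
    rw [show substFun (L := Lforms s) (f ^ n)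
        = substHom (Lforms s) (Lforms_homog s) (f ^ n) from rfl, map_pow]
    rfl
  rw [this] at hf
  exact Kmodel_radical hf

end SubstAux

lemma SubstAux.Jideal_integrallyClosed (s : ℂ) (hs : s ≠ 0) :
    IdealIsIntegrallyClosed (SubstAux.Jideal s) := by
  rintro f ⟨n, hn, a, ha, heq⟩
  apply SubstAux.J_radical s hs (n := n)
  have hfn : f ^ n = -∑ i ∈ Finset.Icc 1 n, a i * f ^ (n - i) :=
    eq_neg_of_add_eq_zero_left heq
  rw [hfn]
  refine neg_mem (Ideal.sum_mem _ fun i hi => Ideal.mul_mem_right _ _ ?_)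
  have h1 : 1 ≤ i := (Finset.mem_Icc.1 hi).1
  exact Ideal.pow_le_self (by omega) (ha i hi)

open MvPowerSeries in
/-- In `ℂ[[x,y,z]]`, each of the ideals `(z+x+y, x²+y²)` and `(z+x+y, x²+2y²)` is
integrally closed. -/
theorem two_ideals_integrallyClosed :
    letI x : MvPowerSeries (Fin 3) ℂ := X 0
    letI y : MvPowerSeries (Fin 3) ℂ := X 1
    letI z : MvPowerSeries (Fin 3) ℂ := X 2
    IdealIsIntegrallyClosed (Ideal.span {z + x + y, x ^ 2 + y ^ 2}) ∧
    IdealIsIntegrallyClosed (Ideal.span {z + x + y, x ^ 2 + 2 * y ^ 2}) := by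
  constructor
  · have h := SubstAux.Jideal_integrallyClosed Complex.I Complex.I_ne_zero
    have hq : SubstAux.qS Complex.I
        = (X 0 ^ 2 + X 1 ^ 2 : MvPowerSeries (Fin 3) ℂ) := by
      rw [SubstAux.qS, Complex.I_sq, map_neg, map_one]
      ring
    rw [SubstAux.Jideal, SubstAux.gS, hq] at h
    exact h
  · set s2 : ℂ := Complex.I * (Real.sqrt 2 : ℂ) with hs2def
    have hs2 : s2 ≠ 0 := by
      apply mul_ne_zero Complex.I_ne_zero
      rw [Complex.ofReal_ne_zero]
      positivity
    have h := SubstAux.Jideal_integrallyClosed s2 hs2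
    have hsq : s2 ^ 2 = (-2 : ℂ) := by
      rw [hs2def, mul_pow, Complex.I_sq, ← Complex.ofReal_pow,
        Real.sq_sqrt (by norm_num : (2:ℝ) ≥ 0)]
      norm_num
    have hq : SubstAux.qS s2
        = (X 0 ^ 2 + 2 * X 1 ^ 2 : MvPowerSeries (Fin 3) ℂ) := by
      rw [SubstAux.qS, hsq, map_neg, map_ofNat]
      ring
    rw [SubstAux.Jideal, SubstAux.gS, hq] at h
    exact h
end
end

section
/- Let G(x,y) ∈ ℂ[[x,y]] satisfy G = ax + by + (higher order terms) with a·b ≠ 0, and let m > 1. Then there exists a unique polynomial q(x) ∈ ℂ[x] of degree < m with q(0) = 0 such that the ideal (G, (x,y)^m) equals (y + q(x), x^m) in ℂ[[x,y]]. -/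
/-!
Write `G = x g + y v`; then `v` is a unit (`v(0) = b`), so `(G) = (y + x h)` with `h = v⁻¹ g`.
Every series is a constant plus an element of `(x) + (G)`, so `h` agrees with a polynomial `p(x)`
modulo `(G) + (x^(m-1))`. Multiplying by `x`, `y + x h` becomes a unit multiple of `y + x p(x)`
modulo `x^m`, which gives `q = x p`. For uniqueness, the substitution `y ↦ -q(x)` kills `y + q(x)`,
so a series in `x` alone lying in `(y + q(x), x^m)` is divisible by `x^m`.
-/

theorem Ideal.sup_pow_le_sup_pow_right {A : Type*} [CommSemiring A] (I J : Ideal A) (n : ℕ) :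
    (I ⊔ J) ^ n ≤ I ⊔ J ^ n := by
  induction n with
  | zero => simp
  | succ n ih =>
    rw [pow_succ, pow_succ]
    refine (Ideal.mul_mono_left ih).trans ?_
    rw [Ideal.sup_mul, Ideal.mul_sup, Ideal.mul_sup]
    exact sup_le
      (sup_le (le_sup_of_le_left Ideal.mul_le_right) (le_sup_of_le_left Ideal.mul_le_left))
      (sup_le (le_sup_of_le_left Ideal.mul_le_right) le_sup_right)

theorem Ideal.span_pair_mul_left_unit {A : Type*} [CommSemiring A] {u : A} (hu : IsUnit u)
    (a t : A) : Ideal.span {u * a, t} = Ideal.span {a, t} := by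
  rw [Ideal.span_insert, Ideal.span_insert, Ideal.span_singleton_mul_left_unit hu]

open Polynomial in
theorem Polynomial.exists_degree_lt_sub_aeval_mem {R A : Type*} [CommRing R] [CommRing A]
    [Algebra R A] {x : A} {I : Ideal A}
    (h : ∀ f : A, ∃ c : R, f - algebraMap R A c ∈ Ideal.span {x} ⊔ I) (f : A) (n : ℕ) :
    ∃ p : R[X], p.degree < n ∧ f - aeval x p ∈ I ⊔ Ideal.span {x ^ n} := by
  induction n with
  | zero => exact ⟨0, by simp, by simp⟩
  | succ n ih =>
    obtain ⟨p, hp, hfp⟩ := ih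
    obtain ⟨i, hi, _, hg, hfp⟩ := Submodule.mem_sup.1 hfp
    obtain ⟨g, rfl⟩ := Ideal.mem_span_singleton'.1 hg
    obtain ⟨c, hc⟩ := h g
    obtain ⟨_, hr, j, hj, hc⟩ := Submodule.mem_sup.1 hc
    obtain ⟨r, rfl⟩ := Ideal.mem_span_singleton'.1 hr
    refine ⟨p + C c * X ^ n, ?_,
      Submodule.mem_sup.2 ⟨i + x ^ n * j, ?_, r * x ^ (n + 1), ?_, ?_⟩⟩
    · calc (p + C c * X ^ n).degree ≤ max p.degree (C c * X ^ n).degree := degree_add_le _ _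
        _ < ↑(n + 1) := max_lt (hp.trans (mod_cast n.lt_succ_self))
            ((degree_C_mul_X_pow_le n c).trans_lt (mod_cast n.lt_succ_self))
    · exact I.add_mem hi (I.mul_mem_left _ hj)
    · exact Ideal.mul_mem_left _ _ (Ideal.mem_span_singleton_self _)
    · rw [map_add, ← sub_sub, ← hfp, map_mul, aeval_C, map_pow, aeval_X]
      linear_combination x ^ n * hc

namespace MvPowerSeries

variable {R : Type*} [CommRing R]

theorem exists_eq_C_add_X_zero_mul_add_X_one_mul (f : MvPowerSeries (Fin 2) R) :
    ∃ g v, f = C (constantCoeff f) + X 0 * g + X 1 * v ∧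
      constantCoeff v = coeff (Finsupp.single 1 1) f := by
  classical
  -- `v = (f - f(x, 0)) / y`
  let v : MvPowerSeries (Fin 2) R := fun d => coeff (d + Finsupp.single 1 1) f
  have hv (d : Fin 2 →₀ ℕ) : coeff d v = coeff (d + Finsupp.single 1 1) f := rfl
  obtain ⟨g, hg⟩ : X 0 ∣ f - C (constantCoeff f) - X 1 * v := by
    refine X_dvd_iff.2 fun d hd => ?_
    rw [map_sub, map_sub, X, coeff_monomial_mul, coeff_C]
    by_cases hd1 : d 1 = 0
    · obtain rfl : d = 0 := by ext i; fin_cases i <;> simp [hd, hd1]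
      simp
    · have hle : Finsupp.single 1 1 ≤ d := by
        intro i
        fin_cases i <;> simp
        omega
      have hne : d ≠ 0 := by rintro rfl; simp at hd1
      rw [if_pos hle, if_neg hne, one_mul, hv, tsub_add_cancel_of_le hle, sub_zero, sub_self]
  exact ⟨g, v, by rw [← hg]; ring, by rw [← coeff_zero_eq_constantCoeff_apply, hv, zero_add]⟩

theorem mem_span_X_zero_X_one_of_constantCoeff_eq_zero {f : MvPowerSeries (Fin 2) R}
    (hf : constantCoeff f = 0) : f ∈ Ideal.span {X 0, X 1} := by
  obtain ⟨g, v, hfgv, -⟩ := exists_eq_C_add_X_zero_mul_add_X_one_mul f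
  rw [hfgv, hf, map_zero, zero_add]
  exact Ideal.add_mem _ (Ideal.mul_mem_right _ _ (Ideal.subset_span (by simp)))
    (Ideal.mul_mem_right _ _ (Ideal.subset_span (by simp)))

theorem span_X_zero_X_one_pow_le {q : Polynomial R} (hq : q.coeff 0 = 0) (m : ℕ) :
    Ideal.span {X 0, X 1} ^ m ≤
      Ideal.span {X 1 + Polynomial.aeval (X 0 : MvPowerSeries (Fin 2) R) q, X 0 ^ m} := by
  set Q := Polynomial.aeval (X 0 : MvPowerSeries (Fin 2) R) q with hQ_def
  have hQ : Q ∈ Ideal.span {X 0} := by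
    obtain ⟨r, hr⟩ := Polynomial.X_dvd_iff.2 hq
    exact Ideal.mem_span_singleton.2 ⟨Polynomial.aeval (X 0) r, by
      rw [hQ_def, hr, map_mul, Polynomial.aeval_X]⟩
  have hle : Ideal.span {X 0, X 1} ≤ Ideal.span {X 1 + Q} ⊔ Ideal.span {X 0} := by
    rw [Ideal.span_le]
    rintro _ (rfl | rfl)
    · exact Ideal.mem_sup_right (Ideal.mem_span_singleton_self _)
    · have h := Ideal.sub_mem _ (Ideal.mem_sup_left (Ideal.mem_span_singleton_self (X 1 + Q)))
        (Ideal.mem_sup_right (S := Ideal.span {X 1 + Q}) hQ)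
      rwa [add_sub_cancel_right] at h
  calc Ideal.span {X 0, X 1} ^ m ≤ (Ideal.span {X 1 + Q} ⊔ Ideal.span {X 0}) ^ m :=
        Ideal.pow_right_mono hle m
    _ ≤ Ideal.span {X 1 + Q} ⊔ Ideal.span {X 0} ^ m := Ideal.sup_pow_le_sup_pow_right _ _ m
    _ = Ideal.span {X 1 + Q, X 0 ^ m} := by
        rw [Ideal.span_singleton_pow, ← Ideal.span_insert]

theorem span_singleton_sup_pow_eq {G : MvPowerSeries (Fin 2) R} {q : Polynomial R}
    (hq : q.coeff 0 = 0) {m : ℕ}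
    (hG : Ideal.span {G, X 0 ^ m} = Ideal.span {X 1 + Polynomial.aeval (X 0) q, X 0 ^ m}) :
    Ideal.span {G} ⊔ Ideal.span {X 0, X 1} ^ m =
      Ideal.span {X 1 + Polynomial.aeval (X 0) q, X 0 ^ m} := by
  have hx : (X 0 : MvPowerSeries (Fin 2) R) ^ m ∈ Ideal.span {X 0, X 1} ^ m :=
    Ideal.pow_mem_pow (Ideal.subset_span (by simp)) m
  rw [← sup_eq_right.2 ((Ideal.span_singleton_le_iff_mem _).2 hx), ← sup_assoc,
    ← Ideal.span_insert, hG, sup_eq_left.2 (span_X_zero_X_one_pow_le hq m)]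

open Polynomial in
theorem exists_span_pair_eq_span_X_one_add_aeval {G : MvPowerSeries (Fin 2) R}
    (h0 : constantCoeff G = 0) (hb : IsUnit (coeff (Finsupp.single 1 1) G)) {m : ℕ}
    (hm : 0 < m) :
    ∃ q : R[X], q.degree < m ∧ q.coeff 0 = 0 ∧
      Ideal.span {G, X 0 ^ m} = Ideal.span {X 1 + Polynomial.aeval (X 0) q, X 0 ^ m} := by
  obtain ⟨k, rfl⟩ : ∃ k, m = k + 1 := ⟨m - 1, (Nat.succ_pred_eq_of_pos hm).symm⟩
  obtain ⟨g, v, hG, hv⟩ := exists_eq_C_add_X_zero_mul_add_X_one_mul G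
  have hvu : IsUnit v := isUnit_iff_constantCoeff.2 (hv ▸ hb)
  set h := ↑hvu.unit⁻¹ * g
  set G' : MvPowerSeries (Fin 2) R := X 1 + X 0 * h with hG'
  have hGG' : G = v * G' := by
    rw [hG, h0, map_zero, zero_add]
    linear_combination (X 0 * g) * hvu.mul_val_inv.symm
  have hM : ∀ f, ∃ c : R, f - algebraMap R _ c ∈ Ideal.span {X 0} ⊔ Ideal.span {G'} := by
    intro f
    refine ⟨constantCoeff f, ?_⟩
    have hf : constantCoeff (f - algebraMap R _ (constantCoeff f)) = 0 := by
      rw [map_sub, ← c_eq_algebraMap, constantCoeff_C, sub_self]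
    refine (Ideal.span_le.2 ?_) (mem_span_X_zero_X_one_of_constantCoeff_eq_zero hf)
    rintro _ (rfl | rfl)
    · exact Ideal.mem_sup_left (Ideal.mem_span_singleton_self _)
    · rw [show (X 1 : MvPowerSeries (Fin 2) R) = G' - h * X 0 by ring]
      exact Ideal.sub_mem _ (Ideal.mem_sup_right (Ideal.mem_span_singleton_self _))
        (Ideal.mem_sup_left (Ideal.mul_mem_left _ _ (Ideal.mem_span_singleton_self _)))
  obtain ⟨p, hp, hhp⟩ := exists_degree_lt_sub_aeval_mem hM h k
  obtain ⟨_, hc, _, hr, hhp⟩ := Submodule.mem_sup.1 hhp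
  obtain ⟨c, rfl⟩ := Ideal.mem_span_singleton'.1 hc
  obtain ⟨r, rfl⟩ := Ideal.mem_span_singleton'.1 hr
  refine ⟨Polynomial.X * p, ?_, by simp, ?_⟩
  · rw [degree_lt_iff_coeff_zero] at hp ⊢
    rintro (_ | j) hj
    · omega
    · rw [coeff_X_mul]
      exact hp j (by omega)
  have hw : IsUnit (1 - X 0 * c : MvPowerSeries (Fin 2) R) := by
    simp [isUnit_iff_constantCoeff]
  have key : (1 - X 0 * c) * G' =
      X 1 + Polynomial.aeval (X 0) (Polynomial.X * p) + r * X 0 ^ (k + 1) := by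
    rw [map_mul, aeval_X]
    linear_combination hG' - X 0 * hhp
  rw [hGG', Ideal.span_pair_mul_left_unit hvu, ← Ideal.span_pair_mul_left_unit hw, key,
    Ideal.span_pair_add_mul_right]

theorem eq_zero_of_aeval_X_zero_mem_span {q p : Polynomial R} (hq : q.coeff 0 = 0) {m : ℕ}
    (hp : p.degree < m)
    (h : Polynomial.aeval (X 0 : MvPowerSeries (Fin 2) R) p ∈
      Ideal.span {X 1 + Polynomial.aeval (X 0) q, X 0 ^ m}) :
    p = 0 := by
  have ha : HasSubst ![PowerSeries.X, -(q : PowerSeries R)] :=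
    hasSubst_of_constantCoeff_zero <| Fin.forall_fin_two.2
      ⟨PowerSeries.constantCoeff_X, by
        change PowerSeries.constantCoeff (-(q : PowerSeries R)) = 0
        rw [map_neg, ← PowerSeries.coeff_zero_eq_constantCoeff_apply, Polynomial.coeff_coe, hq,
          neg_zero]⟩
  have hcoe (r : Polynomial R) :
      substAlgHom ha (Polynomial.aeval (X 0 : MvPowerSeries (Fin 2) R) r) = r := by
    rw [← Polynomial.aeval_algHom_apply, substAlgHom_X, Matrix.cons_val_zero, Polynomial.aeval_def,
      ← Polynomial.eval₂_C_X_eq_coe]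
    rfl
  have hmap := Ideal.mem_map_of_mem (substAlgHom ha) h
  simp only [Ideal.map_span, Set.image_pair, map_add, map_pow, substAlgHom_X, hcoe,
    Matrix.cons_val_zero, Matrix.cons_val_one, neg_add_cancel, Ideal.span_insert_zero,
    Ideal.mem_span_singleton, PowerSeries.X_pow_dvd_iff, Polynomial.coeff_coe] at hmap
  ext i
  rw [Polynomial.coeff_zero]
  by_cases hi : i < m
  · exact hmap i hi
  · exact Polynomial.coeff_eq_zero_of_degree_lt (hp.trans_le (mod_cast not_lt.1 hi))

theorem eq_of_span_X_one_add_aeval_eq {q q' : Polynomial R} (hq : q.coeff 0 = 0) {m : ℕ}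
    (hq_deg : q.degree < m) (hq'_deg : q'.degree < m)
    (h : Ideal.span {X 1 + Polynomial.aeval (X 0 : MvPowerSeries (Fin 2) R) q', X 0 ^ m} =
      Ideal.span {X 1 + Polynomial.aeval (X 0) q, X 0 ^ m}) :
    q' = q := by
  refine sub_eq_zero.1 (eq_zero_of_aeval_X_zero_mem_span hq
    ((Polynomial.degree_sub_le _ _).trans_lt (max_lt hq'_deg hq_deg)) ?_)
  rw [map_sub, show ∀ a b : MvPowerSeries (Fin 2) R, a - b = (X 1 + a) - (X 1 + b) by
    intros; ring]
  refine Ideal.sub_mem _ ?_ (Ideal.subset_span (by simp))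
  exact h ▸ Ideal.subset_span (by simp)

end MvPowerSeries

open MvPowerSeries in
theorem unique_q_ideal_eq_general (G : MvPowerSeries (Fin 2) ℂ) (a b : ℂ)
    (h0 : constantCoeff G = 0)
    (hb : coeff (Finsupp.single (1 : Fin 2) 1) G = b)
    (hab : a * b ≠ 0) (m : ℕ) (hm : 1 < m) :
    ∃! q : Polynomial ℂ, q.degree < m ∧ q.coeff 0 = 0 ∧
      Ideal.span {G} ⊔ Ideal.span {(X 0 : MvPowerSeries (Fin 2) ℂ), X 1} ^ m =
        Ideal.span {(X 1 : MvPowerSeries (Fin 2) ℂ) + Polynomial.aeval (X 0) q,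
          (X 0 : MvPowerSeries (Fin 2) ℂ) ^ m} := by
  obtain ⟨q, hq_deg, hq0, hGq⟩ := exists_span_pair_eq_span_X_one_add_aeval h0
    (hb ▸ (right_ne_zero_of_mul hab).isUnit) (zero_lt_one.trans hm)
  refine ⟨q, ⟨hq_deg, hq0, span_singleton_sup_pow_eq hq0 hGq⟩, ?_⟩
  rintro q' ⟨hq'_deg, -, hq'⟩
  exact eq_of_span_X_one_add_aeval_eq hq0 hq_deg hq'_deg
    (hq'.symm.trans (span_singleton_sup_pow_eq hq0 hGq))

open MvPowerSeries in
/-- If `G = ax + by + (higher order terms)` in `ℂ[[x,y]]` with `ab ≠ 0` and `m > 1`, then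
there is a unique polynomial `q(x)` of degree `< m` with `q(0) = 0` such that
`(G, (x,y)^m) = (y + q(x), x^m)`. -/
theorem unique_q_ideal_eq (G : MvPowerSeries (Fin 2) ℂ) (a b : ℂ)
    (h0 : constantCoeff G = 0)
    (ha : coeff (Finsupp.single (0 : Fin 2) 1) G = a)
    (hb : coeff (Finsupp.single (1 : Fin 2) 1) G = b)
    (hab : a * b ≠ 0) (m : ℕ) (hm : 1 < m) :
    ∃! q : Polynomial ℂ, q.degree < m ∧ q.coeff 0 = 0 ∧
      Ideal.span {G} ⊔ Ideal.span {(X 0 : MvPowerSeries (Fin 2) ℂ), X 1} ^ m =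
        Ideal.span {(X 1 : MvPowerSeries (Fin 2) ℂ) + Polynomial.aeval (X 0) q,
          (X 0 : MvPowerSeries (Fin 2) ℂ) ^ m} :=
  unique_q_ideal_eq_general G a b h0 hb hab m hm
end

section
/- In ℂ[[x,y]], the square of the ideal (y+x, x^{2m}) equals the ideal generated by (y+x)^2, (y+x)·x^{2m}, and x^{4m}, and this ideal is integrally closed for every positive integer m. -/
noncomputable section
namespace SqAux

open MvPowerSeries Finsupp

abbrev S : Type := MvPowerSeries (Fin 2) ℂ

/-- image of the monomial `x^{e 0} y^{e 1}` under substitution `y ↦ y + c x`. -/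
def M (c : ℂ) (e : Fin 2 →₀ ℕ) : S :=
  (X 0) ^ (e 0) * (X 1 + C (σ := Fin 2) (R := ℂ) c * X 0) ^ (e 1)

lemma M_zero (c : ℂ) : M c 0 = 1 := by simp [M]

lemma M_add (c : ℂ) (e e' : Fin 2 →₀ ℕ) : M c (e + e') = M c e * M c e' := by
  simp only [M, Finsupp.add_apply, pow_add]; ring

/-- `h` is homogeneous of total degree `k` (in the weak sense). -/
def Pure (k : ℕ) (h : S) : Prop := ∀ d : Fin 2 →₀ ℕ, d 0 + d 1 ≠ k → coeff (R := ℂ) d h = 0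

lemma Pure.mul {k l : ℕ} {g h : S} (hg : Pure k g) (hh : Pure l h) : Pure (k + l) (g * h) := by
  intro d hd
  rw [coeff_mul]
  apply Finset.sum_eq_zero
  rintro ⟨p, q⟩ hpq
  rw [Finset.HasAntidiagonal.mem_antidiagonal] at hpq
  by_cases h1 : p 0 + p 1 = k
  · have h2 : q 0 + q 1 ≠ l := by
      intro h2; apply hd
      have := congrArg (fun z => z 0) hpq
      have := congrArg (fun z => z 1) hpq
      simp only [Finsupp.add_apply] at *
      omega
    rw [hh q h2, mul_zero]
  · rw [hg p h1, zero_mul]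

lemma Pure.pow {k : ℕ} {g : S} (hg : Pure k g) (n : ℕ) : Pure (n * k) (g ^ n) := by
  induction n with
  | zero => intro d hd; rw [pow_zero, coeff_one, if_neg]; rintro rfl; simp at hd
  | succ n ih =>
      have := ih.mul hg
      rw [pow_succ, show (n + 1) * k = n * k + k by ring]
      exact this

lemma pure_M (c : ℂ) (e : Fin 2 →₀ ℕ) : Pure (e 0 + e 1) (M c e) := by
  have h0 : Pure 1 (X 0 : S) := by
    intro d hd
    rw [MvPowerSeries.X, coeff_monomial, if_neg]
    rintro rfl
    simp [Finsupp.single_apply] at hd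
  have h1 : Pure 1 (X 1 + C (σ := Fin 2) (R := ℂ) c * X 0 : S) := by
    intro d hd
    rw [map_add, coeff_C_mul, MvPowerSeries.X, MvPowerSeries.X, coeff_monomial, coeff_monomial,
      if_neg, if_neg, mul_zero, add_zero]
    · rintro rfl; simp [Finsupp.single_apply] at hd
    · rintro rfl; simp [Finsupp.single_apply] at hd
  have := (h0.pow (e 0)).mul (h1.pow (e 1))
  rw [mul_one, mul_one] at this
  exact this

/-- a finset containing all `e` with `e 0 + e 1 < N`. -/
def TD (N : ℕ) : Finset (Fin 2 →₀ ℕ) :=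
  Finset.Iio (Finsupp.single 0 N + Finsupp.single 1 N)

lemma mem_TD {N : ℕ} {e : Fin 2 →₀ ℕ} (h0 : e 0 < N) (h1 : e 1 < N) : e ∈ TD N := by
  rw [TD, Finset.mem_Iio, lt_iff_le_and_ne]
  constructor
  · intro i
    fin_cases i <;> simp [Finsupp.single_apply] <;> omega
  · intro he
    have := congrArg (fun z => z 0) he
    simp [Finsupp.single_apply] at this
    omega

lemma mem_TD_of_sum {N : ℕ} {e : Fin 2 →₀ ℕ} (h : e 0 + e 1 < N) : e ∈ TD N :=
  mem_TD (by omega) (by omega)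

/-- the substitution `y ↦ y + c x`, as a raw function. -/
def sigmaFun (c : ℂ) (f : S) : S :=
  fun d => ∑ e ∈ TD (d 0 + d 1 + 1), coeff (R := ℂ) e f * coeff (R := ℂ) d (M c e)

lemma coeff_sigmaFun (c : ℂ) (f : S) (d : Fin 2 →₀ ℕ) :
    coeff (R := ℂ) d (sigmaFun c f) = ∑ e ∈ TD (d 0 + d 1 + 1), coeff (R := ℂ) e f * coeff (R := ℂ) d (M c e) := rfl

lemma sigma_eq_sum (c : ℂ) (f : S) (d : Fin 2 →₀ ℕ) (T : Finset (Fin 2 →₀ ℕ))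
    (hT : ∀ e : Fin 2 →₀ ℕ, e 0 + e 1 = d 0 + d 1 → e ∈ T) :
    ∑ e ∈ T, coeff (R := ℂ) e f * coeff (R := ℂ) d (M c e) = coeff (R := ℂ) d (sigmaFun c f) := by
  have key : ∀ (U : Finset (Fin 2 →₀ ℕ)), (∀ e : Fin 2 →₀ ℕ, e 0 + e 1 = d 0 + d 1 → e ∈ U) →
      ∑ e ∈ U.filter (fun e => e 0 + e 1 = d 0 + d 1), coeff (R := ℂ) e f * coeff (R := ℂ) d (M c e)
        = ∑ e ∈ U, coeff (R := ℂ) e f * coeff (R := ℂ) d (M c e) := by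
    intro U hU
    apply Finset.sum_filter_of_ne
    intro e _ hne
    by_contra hP
    apply hne
    rw [pure_M c e d (fun h => hP h.symm), mul_zero]
  rw [coeff_sigmaFun, ← key T hT,
    ← key (TD (d 0 + d 1 + 1)) (fun e he => mem_TD_of_sum (by omega))]
  congr 1
  ext e
  simp only [Finset.mem_filter]
  constructor
  · rintro ⟨-, he⟩; exact ⟨mem_TD_of_sum (by omega), he⟩
  · rintro ⟨-, he⟩; exact ⟨hT e he, he⟩

/-- truncation of a power series to a polynomial, keeping the coefficients in `TD N`. -/
def PT (N : ℕ) (f : S) : MvPolynomial (Fin 2) ℂ :=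
  ∑ e ∈ TD N, MvPolynomial.monomial e (coeff (R := ℂ) e f)

lemma coeff_PT (N : ℕ) (f : S) (e : Fin 2 →₀ ℕ) :
    (PT N f).coeff e = if e ∈ TD N then coeff (R := ℂ) e f else 0 := by
  rw [PT, MvPolynomial.coeff_sum]
  simp only [MvPolynomial.coeff_monomial]
  rw [Finset.sum_ite_eq' (TD N) e (fun e' => coeff (R := ℂ) e' f)]

/-- the substitution target. -/
def subV (c : ℂ) : Fin 2 → S := ![X 0, X 1 + C (σ := Fin 2) (R := ℂ) c * X 0]

lemma aeval_monomial' (c : ℂ) (e : Fin 2 →₀ ℕ) (a : ℂ) :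
    MvPolynomial.aeval (subV c) (MvPolynomial.monomial e a) = C (σ := Fin 2) (R := ℂ) a * M c e := by
  rw [MvPolynomial.aeval_monomial, Finsupp.prod_fintype _ _ (fun i => pow_zero _),
    Fin.prod_univ_two]
  rfl

lemma coeff_aeval (c : ℂ) (P : MvPolynomial (Fin 2) ℂ) (d : Fin 2 →₀ ℕ) (T : Finset (Fin 2 →₀ ℕ))
    (hT : P.support ⊆ T) :
    coeff (R := ℂ) d (MvPolynomial.aeval (subV c) P) = ∑ e ∈ T, P.coeff e * coeff (R := ℂ) d (M c e) := by
  conv_lhs => rw [P.as_sum]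
  rw [map_sum, map_sum]
  rw [Finset.sum_subset hT]
  · apply Finset.sum_congr rfl
    intro e _
    rw [aeval_monomial', coeff_C_mul]
  · intro e _ he
    rw [MvPolynomial.notMem_support_iff] at he
    rw [aeval_monomial', coeff_C_mul, he, zero_mul]

lemma coeff_aeval_congr (c : ℂ) (P Q : MvPolynomial (Fin 2) ℂ) (d : Fin 2 →₀ ℕ)
    (h : ∀ e : Fin 2 →₀ ℕ, e 0 + e 1 = d 0 + d 1 → P.coeff e = Q.coeff e) :
    coeff (R := ℂ) d (MvPolynomial.aeval (subV c) P) = coeff (R := ℂ) d (MvPolynomial.aeval (subV c) Q) := by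
  rw [coeff_aeval c P d (P.support ∪ Q.support) Finset.subset_union_left,
    coeff_aeval c Q d (P.support ∪ Q.support) Finset.subset_union_right]
  apply Finset.sum_congr rfl
  intro e _
  by_cases he : e 0 + e 1 = d 0 + d 1
  · rw [h e he]
  · rw [pure_M c e d (fun hh => he hh.symm), mul_zero, mul_zero]

lemma coeff_aeval_PT (c : ℂ) (f : S) (d : Fin 2 →₀ ℕ) {N : ℕ} (hN : d 0 + d 1 < N) :
    coeff (R := ℂ) d (MvPolynomial.aeval (subV c) (PT N f)) = coeff (R := ℂ) d (sigmaFun c f) := by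
  rw [coeff_aeval c _ d (TD N) (fun e he => by
    by_contra h
    rw [MvPolynomial.mem_support_iff, coeff_PT, if_neg h] at he
    exact he rfl)]
  rw [← sigma_eq_sum c f d (TD N) (fun e he => mem_TD_of_sum (by omega))]
  apply Finset.sum_congr rfl
  intro e he
  rw [coeff_PT, if_pos he]

lemma sigmaFun_one (c : ℂ) : sigmaFun c 1 = 1 := by
  ext d
  rw [coeff_sigmaFun]
  rw [Finset.sum_eq_single (0 : Fin 2 →₀ ℕ)]
  · rw [M_zero, coeff_one]
    simp
  · intro e _ hne
    rw [coeff_one, if_neg hne, zero_mul]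
  · intro h
    exact absurd (mem_TD_of_sum (by simp)) h

lemma sigmaFun_mul (c : ℂ) (f g : S) : sigmaFun c (f * g) = sigmaFun c f * sigmaFun c g := by
  ext d
  set N := d 0 + d 1 + 1 with hN
  have hdN : d 0 + d 1 < N := by omega
  have key : coeff (R := ℂ) d (MvPolynomial.aeval (subV c) (PT N (f * g)))
      = coeff (R := ℂ) d (MvPolynomial.aeval (subV c) (PT N f * PT N g)) := by
    apply coeff_aeval_congr
    intro e he
    rw [coeff_PT, if_pos (mem_TD_of_sum (by omega)), MvPolynomial.coeff_mul, coeff_mul]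
    apply Finset.sum_congr rfl
    rintro ⟨p, q⟩ hpq
    dsimp only
    have hpq' : p + q = e := by simpa using hpq
    have h0 := congrArg (fun z => z 0) hpq'
    have h1 := congrArg (fun z => z 1) hpq'
    simp only [Finsupp.add_apply] at h0 h1
    rw [coeff_PT, coeff_PT, if_pos (mem_TD_of_sum (by omega)),
      if_pos (mem_TD_of_sum (by omega))]
  rw [← coeff_aeval_PT c (f * g) d hdN, key, map_mul, coeff_mul, coeff_mul]
  apply Finset.sum_congr rfl
  rintro ⟨p, q⟩ hpq
  have hpq' : p + q = d := by simpa using hpq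
  have h0 := congrArg (fun z => z 0) hpq'
  have h1 := congrArg (fun z => z 1) hpq'
  simp only [Finsupp.add_apply] at h0 h1
  rw [coeff_aeval_PT c f p (by omega), coeff_aeval_PT c g q (by omega)]

/-- the substitution `y ↦ y + c x` as a ring homomorphism. -/
def sigma (c : ℂ) : S →+* S where
  toFun := sigmaFun c
  map_one' := sigmaFun_one c
  map_mul' := sigmaFun_mul c
  map_zero' := by
    ext d
    rw [coeff_sigmaFun]
    apply Finset.sum_eq_zero
    intro e _
    rw [map_zero, zero_mul]
  map_add' := by
    intro f g
    ext d
    rw [coeff_sigmaFun, map_add, coeff_sigmaFun, coeff_sigmaFun, ← Finset.sum_add_distrib]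
    apply Finset.sum_congr rfl
    intro e _
    rw [map_add, add_mul]

lemma coeff_sigma (c : ℂ) (f : S) (d : Fin 2 →₀ ℕ) :
    coeff (R := ℂ) d (sigma c f) = ∑ e ∈ TD (d 0 + d 1 + 1), coeff (R := ℂ) e f * coeff (R := ℂ) d (M c e) := rfl

lemma coeff_sigma_congr (c : ℂ) (f g : S) (d : Fin 2 →₀ ℕ)
    (h : ∀ e : Fin 2 →₀ ℕ, e 0 + e 1 = d 0 + d 1 → coeff (R := ℂ) e f = coeff (R := ℂ) e g) :
    coeff (R := ℂ) d (sigma c f) = coeff (R := ℂ) d (sigma c g) := by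
  rw [coeff_sigma, coeff_sigma]
  apply Finset.sum_congr rfl
  intro e _
  by_cases he : e 0 + e 1 = d 0 + d 1
  · rw [h e he]
  · rw [pure_M c e d (fun hh => he hh.symm), mul_zero, mul_zero]

lemma sigma_monomial (c : ℂ) (e : Fin 2 →₀ ℕ) (a : ℂ) :
    sigma c (monomial (R := ℂ) e a) = C (σ := Fin 2) (R := ℂ) a * M c e := by
  ext d
  rw [coeff_sigma, coeff_C_mul]
  by_cases he : e ∈ TD (d 0 + d 1 + 1)
  · rw [Finset.sum_eq_single e]
    · rw [coeff_monomial, if_pos rfl]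
    · intro e' _ hne
      rw [coeff_monomial, if_neg hne, zero_mul]
    · intro h; exact absurd he h
  · rw [Finset.sum_eq_zero, eq_comm]
    · have hde : d 0 + d 1 ≠ e 0 + e 1 := by
        intro hh
        exact he (mem_TD_of_sum (by omega))
      rw [pure_M c e d hde, mul_zero]
    · intro e' he'
      rw [coeff_monomial, if_neg, zero_mul]
      rintro rfl
      exact he he'

lemma sigma_C (c : ℂ) (a : ℂ) : sigma c (C (σ := Fin 2) (R := ℂ) a) = C (σ := Fin 2) (R := ℂ) a := by
  have : (C (σ := Fin 2) (R := ℂ) a : S) = monomial (R := ℂ) 0 a := by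
    ext d; rw [coeff_monomial]; simp [MvPowerSeries.coeff_C, eq_comm]
  rw [this, sigma_monomial, M_zero, mul_one]
  exact this.symm

lemma fe_eta (e : Fin 2 →₀ ℕ) : Finsupp.single 0 (e 0) + Finsupp.single 1 (e 1) = e := by
  ext i
  fin_cases i <;> simp [Finsupp.single_apply]

lemma sigma_X0 (c : ℂ) : sigma c (X 0) = (X 0 : S) := by
  rw [X_def 0, sigma_monomial, map_one, one_mul, M]
  simp [Finsupp.single_apply, ← X_def]

lemma sigma_X1 (c : ℂ) : sigma c (X 1) = (X 1 + C (σ := Fin 2) (R := ℂ) c * X 0 : S) := by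
  rw [X_def 1, sigma_monomial, map_one, one_mul, M]
  simp [Finsupp.single_apply, ← X_def]

lemma sigma_lin (c c' : ℂ) :
    sigma c (X 1 + C (σ := Fin 2) (R := ℂ) c' * X 0) = (X 1 + C (σ := Fin 2) (R := ℂ) (c + c') * X 0 : S) := by
  rw [map_add, map_mul, sigma_X1, sigma_C, sigma_X0, map_add]
  ring

lemma sigma_M (c c' : ℂ) (e : Fin 2 →₀ ℕ) : sigma c (M c' e) = M (c + c') e := by
  rw [M, map_mul, map_pow, map_pow, sigma_X0, sigma_lin, M]

lemma sigma_aeval (c c' : ℂ) (P : MvPolynomial (Fin 2) ℂ) :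
    sigma c (MvPolynomial.aeval (subV c') P) = MvPolynomial.aeval (subV (c + c')) P := by
  have : (sigma c).comp ((MvPolynomial.aeval (subV c') : MvPolynomial (Fin 2) ℂ →ₐ[ℂ] S) : MvPolynomial (Fin 2) ℂ →+* S)
      = ((MvPolynomial.aeval (subV (c + c')) : MvPolynomial (Fin 2) ℂ →ₐ[ℂ] S) : MvPolynomial (Fin 2) ℂ →+* S) := by
    apply MvPolynomial.ringHom_ext
    · intro a
      simp only [RingHom.coe_comp, Function.comp_apply, RingHom.coe_coe, MvPolynomial.aeval_C]
      rw [show (algebraMap ℂ S) a = C (σ := Fin 2) (R := ℂ) a from rfl, sigma_C]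
    · intro i
      simp only [RingHom.coe_comp, Function.comp_apply, RingHom.coe_coe, MvPolynomial.aeval_X]
      fin_cases i
      · show sigma c (subV c' 0) = subV (c + c') 0
        rw [show subV c' 0 = (X 0 : S) from rfl, sigma_X0]; rfl
      · show sigma c (subV c' 1) = subV (c + c') 1
        rw [show subV c' 1 = (X 1 + C (σ := Fin 2) (R := ℂ) c' * X 0 : S) from rfl, sigma_lin]; rfl
  exact congrArg (fun (F : MvPolynomial (Fin 2) ℂ →+* S) => F P) this

lemma sigma_comp (c c' : ℂ) (f : S) : sigma c (sigma c' f) = sigma (c + c') f := by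
  ext d
  set N := d 0 + d 1 + 1 with hN
  have h1 : coeff (R := ℂ) d (sigma c (sigma c' f))
      = coeff (R := ℂ) d (sigma c (MvPolynomial.aeval (subV c') (PT N f))) := by
    apply coeff_sigma_congr
    intro e he
    rw [show (sigma c' f : S) = sigmaFun c' f from rfl,
      ← coeff_aeval_PT c' f e (N := N) (by omega)]
  rw [h1, sigma_aeval]
  exact coeff_aeval_PT (c + c') f d (by omega)

lemma sigma_zero (f : S) : sigma 0 f = f := by
  ext d
  rw [show (sigma 0 f : S) = sigmaFun 0 f from rfl, coeff_sigmaFun]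
  have hM : ∀ e : Fin 2 →₀ ℕ, M 0 e = monomial (R := ℂ) e 1 := by
    intro e
    rw [M, show (C (σ := Fin 2) (R := ℂ)) (0:ℂ) = 0 from map_zero _, zero_mul, add_zero, X_pow_eq, X_pow_eq,
      monomial_mul_monomial, one_mul, fe_eta]
  rw [Finset.sum_eq_single d]
  · rw [hM, coeff_monomial, if_pos rfl, mul_one]
  · intro e _ hne
    rw [hM, coeff_monomial, if_neg (fun h => hne h.symm), mul_zero]
  · intro h
    exact absurd (mem_TD_of_sum (by omega)) h

lemma sigma_inv (f : S) : sigma 1 (sigma (-1) f) = f := by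
  rw [sigma_comp]
  norm_num
  exact sigma_zero f

section Weight

variable (m : ℕ)

/-- the weight of a monomial: `x` has weight 1, `y` has weight `2m`. -/
def w (d : Fin 2 →₀ ℕ) : ℕ := d 0 + 2 * m * d 1

lemma w_add (d e : Fin 2 →₀ ℕ) : w m (d + e) = w m d + w m e := by
  simp only [w, Finsupp.add_apply]; ring

lemma w_smul (k : ℕ) (d : Fin 2 →₀ ℕ) : w m (k • d) = k * w m d := by
  simp only [w, Finsupp.smul_apply, smul_eq_mul]; ring

/-- the ideal of power series all whose monomials have weight `≥ k`. -/
def VI (k : ℕ) : Ideal S where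
  carrier := {h | ∀ d : Fin 2 →₀ ℕ, w m d < k → coeff (R := ℂ) d h = 0}
  add_mem' := by
    intro a b ha hb d hd
    rw [map_add, ha d hd, hb d hd, add_zero]
  zero_mem' := by intro d _; rw [map_zero]
  smul_mem' := by
    intro r h hh d hd
    rw [smul_eq_mul, coeff_mul]
    apply Finset.sum_eq_zero
    rintro ⟨p, q⟩ hpq
    dsimp only
    have hpq' : p + q = d := by simpa using hpq
    have hw : w m q ≤ w m d := by rw [← hpq', w_add]; omega
    rw [hh q (by omega), mul_zero]

lemma mem_VI {k : ℕ} {h : S} : h ∈ VI m k ↔ ∀ d : Fin 2 →₀ ℕ, w m d < k → coeff (R := ℂ) d h = 0 :=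
  Iff.rfl

lemma VI_mul {k l : ℕ} {g h : S} (hg : g ∈ VI m k) (hh : h ∈ VI m l) : g * h ∈ VI m (k + l) := by
  intro d hd
  rw [coeff_mul]
  apply Finset.sum_eq_zero
  rintro ⟨p, q⟩ hpq
  dsimp only
  have hpq' : p + q = d := by simpa using hpq
  have hw : w m p + w m q = w m d := by rw [← hpq', w_add]
  by_cases h1 : w m p < k
  · rw [hg p h1, zero_mul]
  · rw [hh q (by omega), mul_zero]

lemma VI_pow {k : ℕ} {g : S} (hg : g ∈ VI m k) (n : ℕ) : g ^ n ∈ VI m (n * k) := by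
  induction n with
  | zero => intro d hd; omega
  | succ n ih =>
      rw [pow_succ, show (n + 1) * k = n * k + k by ring]
      exact VI_mul m ih hg

/-- the monomial ideal `(y², y x^{2m}, x^{4m})`. -/
def K : Ideal S :=
  Ideal.span {(X 1 : S) ^ 2, X 1 * X 0 ^ (2 * m), X 0 ^ (4 * m)}

lemma coeff_wmon {e d : Fin 2 →₀ ℕ} : coeff (R := ℂ) d (monomial (R := ℂ) e (1 : ℂ)) = if d = e then 1 else 0 :=
  coeff_monomial d e 1

lemma K_le_VI : K m ≤ VI m (4 * m) := by
  rw [K, Ideal.span_le]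
  rintro h (rfl | rfl | rfl) <;> intro d hd
  · rw [X_pow_eq, coeff_monomial, if_neg]
    rintro rfl
    simp [w, Finsupp.single_apply] at hd
    all_goals omega
  · rw [X_def, X_pow_eq, monomial_mul_monomial, one_mul, coeff_monomial, if_neg]
    rintro rfl
    simp [w, Finsupp.single_apply, Finsupp.add_apply] at hd
    all_goals omega
  · rw [X_pow_eq, coeff_monomial, if_neg]
    rintro rfl
    simp [w, Finsupp.single_apply] at hd
    all_goals omega

lemma Kpow_le (i : ℕ) : (K m) ^ i ≤ VI m (i * (4 * m)) := by
  induction i with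
  | zero => rw [pow_zero, Ideal.one_eq_top]; intro h _ d hd; omega
  | succ i ih =>
      rw [pow_succ]
      refine Ideal.mul_le.mpr (fun r hr s hs => ?_)
      rw [show (i + 1) * (4 * m) = i * (4 * m) + 4 * m by ring]
      exact VI_mul m (ih hr) (K_le_VI m hs)

/-- shift: drop one power of `y`. -/
def Dy (h : S) : S := fun d => coeff (R := ℂ) (d + Finsupp.single 1 1) h

/-- the part of `h` not involving `y`. -/
def Ry (h : S) : S := fun d => if d 1 = 0 then coeff (R := ℂ) d h else 0

lemma split_y (h : S) : h = X 1 * Dy h + Ry h := by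
  ext d
  rw [map_add, X_def, coeff_monomial_mul]
  have hR : coeff (R := ℂ) d (Ry h) = if d 1 = 0 then coeff (R := ℂ) d h else 0 := rfl
  by_cases hd : d 1 = 0
  · rw [hR, if_pos hd, if_neg, zero_add]
    intro hle
    have := hle 1
    simp [Finsupp.single_apply] at this
    omega
  · rw [hR, if_neg hd, add_zero, if_pos, one_mul]
    · have hde : d - Finsupp.single 1 1 + Finsupp.single 1 1 = d := by
        ext i
        simp only [Finsupp.coe_add, Finsupp.coe_tsub, Pi.add_apply, Pi.sub_apply,
          Finsupp.single_apply]
        split_ifs with hi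
        · subst hi; omega
        · omega
      have : coeff (R := ℂ) (d - Finsupp.single 1 1 + Finsupp.single 1 1) h = coeff (R := ℂ) d h := by
        rw [hde]
      rw [show coeff (R := ℂ) (d - Finsupp.single 1 1) (Dy h)
          = coeff (R := ℂ) (d - Finsupp.single 1 1 + Finsupp.single 1 1) h from rfl, this]
    · rw [Finsupp.single_le_iff]
      omega

lemma mem_K_of_V {h : S} (hm : 0 < m) (hh : h ∈ VI m (4 * m)) : h ∈ K m := by
  have hg1 : ((X 1 : S) ^ 2) ∈ K m := Ideal.subset_span (by left; rfl)
  have hg2 : ((X 1 : S) * X 0 ^ (2 * m)) ∈ K m := Ideal.subset_span (by right; left; rfl)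
  have hg3 : ((X 0 : S) ^ (4 * m)) ∈ K m := Ideal.subset_span (by right; right; rfl)
  -- divisibility facts
  have hdvd2 : (X 0 : S) ^ (2 * m) ∣ Ry (Dy h) := by
    rw [X_pow_dvd_iff]
    intro d hd
    show (if d 1 = 0 then coeff (R := ℂ) d (Dy h) else 0) = 0
    by_cases h1 : d 1 = 0
    · rw [if_pos h1]
      show coeff (R := ℂ) (d + Finsupp.single 1 1) h = 0
      apply hh
      simp [w, Finsupp.add_apply, Finsupp.single_apply, h1]
      omega
    · rw [if_neg h1]
  have hdvd4 : (X 0 : S) ^ (4 * m) ∣ Ry h := by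
    rw [X_pow_dvd_iff]
    intro d hd
    show (if d 1 = 0 then coeff (R := ℂ) d h else 0) = 0
    by_cases h1 : d 1 = 0
    · rw [if_pos h1]
      apply hh
      simp [w, h1]
      omega
    · rw [if_neg h1]
  obtain ⟨s, hs⟩ := hdvd2
  obtain ⟨t, ht⟩ := hdvd4
  have hsplit : h = (X 1) ^ 2 * Dy (Dy h) + (X 1 * X 0 ^ (2 * m)) * s + X 0 ^ (4 * m) * t := by
    conv_lhs => rw [split_y h, split_y (Dy h)]
    rw [hs, ht]
    ring
  rw [hsplit]
  exact (K m).add_mem ((K m).add_mem ((K m).mul_mem_right _ hg1) ((K m).mul_mem_right _ hg2))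
    ((K m).mul_mem_right _ hg3)

lemma mem_K_iff {h : S} (hm : 0 < m) : h ∈ K m ↔ h ∈ VI m (4 * m) :=
  ⟨fun hh => K_le_VI m hh, mem_K_of_V m hm⟩

lemma eq_of_w_eq {e d : Fin 2 →₀ ℕ} (h1 : w m e = w m d) (h2 : e 1 = d 1) : e = d := by
  have h0 : e 0 = d 0 := by
    simp only [w] at h1
    rw [h2] at h1
    omega
  ext i
  fin_cases i
  · exact h0
  · exact h2

lemma main_int (hm : 0 < m) (g : S) (n : ℕ) (hn : 0 < n) (b : ℕ → S)
    (hb : ∀ i ∈ Finset.Icc 1 n, b i ∈ VI m (i * (4 * m)))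
    (heq : g ^ n + ∑ i ∈ Finset.Icc 1 n, b i * g ^ (n - i) = 0) :
    g ∈ VI m (4 * m) := by
  by_contra hg
  rw [mem_VI] at hg
  push_neg at hg
  obtain ⟨d₀, hd₀w, hd₀⟩ := hg
  -- minimal weight of a monomial of g
  set Sv : Set ℕ := {k | ∃ d : Fin 2 →₀ ℕ, coeff (R := ℂ) d g ≠ 0 ∧ w m d = k} with hSv
  have hSvne : Sv.Nonempty := ⟨w m d₀, d₀, hd₀, rfl⟩
  set v : ℕ := sInf Sv with hv
  have hle : v ≤ w m d₀ := Nat.sInf_le ⟨d₀, hd₀, rfl⟩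
  have hvlt : v < 4 * m := lt_of_le_of_lt hle hd₀w
  have hVv : ∀ d : Fin 2 →₀ ℕ, w m d < v → coeff (R := ℂ) d g = 0 := by
    intro d hd
    by_contra hc
    have : v ≤ w m d := Nat.sInf_le (show w m d ∈ Sv from ⟨d, hc, rfl⟩)
    omega
  have hgV : g ∈ VI m v := hVv
  obtain ⟨d₁, hd₁, hd₁w⟩ := Nat.sInf_mem hSvne
  set Jset : Set ℕ := {j | ∃ d : Fin 2 →₀ ℕ, coeff (R := ℂ) d g ≠ 0 ∧ w m d = v ∧ d 1 = j} with hJset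
  have bddJ : BddAbove Jset := by
    refine ⟨v, ?_⟩
    rintro j ⟨d, hd, hdw, rfl⟩
    have h2 : d 1 ≤ 2 * m * d 1 := Nat.le_mul_of_pos_left _ (by omega)
    simp only [w] at hdw
    omega
  set jstar : ℕ := sSup Jset with hjstar
  obtain ⟨dstar, hds, hdsw, hds1⟩ := Nat.sSup_mem (show Jset.Nonempty from ⟨d₁ 1, d₁, hd₁, hd₁w, rfl⟩) bddJ
  have hmax : ∀ d : Fin 2 →₀ ℕ, coeff (R := ℂ) d g ≠ 0 → w m d = v → d 1 ≤ jstar :=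
    fun d h1 h2 => le_csSup bddJ ⟨d, h1, h2, rfl⟩
  have pow_claim : ∀ k : ℕ, (g ^ k ∈ VI m (k * v)) ∧
      (∀ e : Fin 2 →₀ ℕ, w m e = k * v → k * jstar < e 1 → coeff (R := ℂ) e (g ^ k) = 0) ∧
      coeff (R := ℂ) (k • dstar) (g ^ k) = (coeff (R := ℂ) dstar g) ^ k := by
    intro k
    induction k with
    | zero =>
        refine ⟨fun d hd => absurd hd (by omega), ?_, ?_⟩
        · intro e hwe hje
          simp only [zero_mul] at hwe hje
          have h20 : 2 * m * e 1 = 0 := by simp only [w] at hwe; omega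
          rcases Nat.mul_eq_zero.mp h20 with h | h
          · omega
          · omega
        · rw [zero_smul, pow_zero, coeff_one, if_pos rfl, pow_zero]
    | succ k ih =>
        have hkv : (k + 1) * v = k * v + v := by ring
        have hkj : (k + 1) * jstar = k * jstar + jstar := by ring
        refine ⟨?_, ?_, ?_⟩
        · rw [pow_succ, hkv]
          exact VI_mul m ih.1 hgV
        · intro e hwe hje
          rw [pow_succ, coeff_mul]
          apply Finset.sum_eq_zero
          rintro ⟨p, q⟩ hpq
          dsimp only
          have hpq' : p + q = e := by simpa using hpq
          have hwpq : w m p + w m q = w m e := by rw [← hpq', w_add]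
          have h1pq : p 1 + q 1 = e 1 := by
            rw [← hpq']; simp [Finsupp.coe_add, Pi.add_apply]
          by_cases hp : w m p < k * v
          · rw [ih.1 p hp, zero_mul]
          by_cases hq : w m q < v
          · rw [hVv q hq, mul_zero]
          have hweq : w m p = k * v ∧ w m q = v := by omega
          by_cases hcq : coeff (R := ℂ) q g = 0
          · rw [hcq, mul_zero]
          have hq1 : q 1 ≤ jstar := hmax q hcq hweq.2
          have hp1 : k * jstar < p 1 := by omega
          rw [ih.2.1 p hweq.1 hp1, zero_mul]
        · rw [pow_succ, coeff_mul]
          rw [Finset.sum_eq_single ((k • dstar : Fin 2 →₀ ℕ), dstar)]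
          · rw [ih.2.2, pow_succ]
          · rintro ⟨p, q⟩ hpq hne
            dsimp only
            have hpq' : p + q = (k + 1) • dstar := by simpa using hpq
            by_contra hne0
            have hcp : coeff (R := ℂ) p (g ^ k) ≠ 0 := fun h => hne0 (by rw [h, zero_mul])
            have hcq : coeff (R := ℂ) q g ≠ 0 := fun h => hne0 (by rw [h, mul_zero])
            have hwpq : w m p + w m q = (k + 1) * v := by
              rw [← w_add, hpq', w_smul, hdsw]
            have hwp : ¬ w m p < k * v := fun h => hcp (ih.1 p h)
            have hwq : ¬ w m q < v := fun h => hcq (hVv q h)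
            have hweq : w m p = k * v ∧ w m q = v := by omega
            have hq1 : q 1 ≤ jstar := hmax q hcq hweq.2
            have hp1 : ¬ k * jstar < p 1 := fun h => hcp (ih.2.1 p hweq.1 h)
            have h1pq : p 1 + q 1 = (k + 1) * jstar := by
              have h := congrArg (fun z : Fin 2 →₀ ℕ => z 1) hpq'
              simp only [Finsupp.coe_add, Pi.add_apply, Finsupp.smul_apply,
                smul_eq_mul] at h
              rw [hds1, ← hjstar] at h
              exact h
            have hq1e : q 1 = jstar := by omega
            have hp1e : p 1 = k * jstar := by omega
            have hqd : q = dstar := eq_of_w_eq m (by rw [hweq.2, hdsw]) (by rw [hq1e, hds1])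
            have hpd : p = k • dstar := by
              apply eq_of_w_eq m
              · rw [hweq.1, w_smul, hdsw]
              · rw [hp1e, Finsupp.smul_apply, hds1, smul_eq_mul]
            exact hne (by rw [hqd, hpd])
          · intro hnotmem
            exfalso
            apply hnotmem
            rw [Finset.HasAntidiagonal.mem_antidiagonal]
            exact (succ_nsmul dstar k).symm
      
  -- the contradiction
  have hsum0 : ∀ i ∈ Finset.Icc 1 n, coeff (R := ℂ) (n • dstar) (b i * g ^ (n - i)) = 0 := by
    intro i hi
    rw [Finset.mem_Icc] at hi
    have hmem : b i * g ^ (n - i) ∈ VI m (i * (4 * m) + (n - i) * v) :=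
      VI_mul m (hb i (Finset.mem_Icc.mpr hi)) (pow_claim (n - i)).1
    apply hmem
    rw [w_smul, hdsw]
    have h1 : i * v + (n - i) * v = n * v := by
      rw [← add_mul]; congr 1; omega
    have h2 : i * v < i * (4 * m) := by
      exact mul_lt_mul_of_pos_left hvlt (by omega)
    omega
  have hco := congrArg (coeff (R := ℂ) (n • dstar)) heq
  rw [map_add, map_zero, map_sum, Finset.sum_eq_zero hsum0, add_zero, (pow_claim n).2.2] at hco
  exact pow_ne_zero n hds hco

end Weight

lemma span_pair_sq {R : Type*} [CommRing R] (a b : R) :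
    Ideal.span {a, b} ^ 2 = Ideal.span {a ^ 2, a * b, b ^ 2} := by
  apply le_antisymm
  · rw [pow_two, Ideal.span_mul_span']
    apply Ideal.span_le.mpr
    rintro z hz
    obtain ⟨p, hp, q, hq, rfl⟩ := Set.mem_mul.mp hz
    rcases hp with rfl | rfl <;> rcases hq with rfl | rfl
    · rw [← pow_two]
      exact Ideal.subset_span (by left; rfl)
    · exact Ideal.subset_span (by right; left; rfl)
    · rw [mul_comm]
      exact Ideal.subset_span (by right; left; rfl)
    · rw [← pow_two]
      exact Ideal.subset_span (by right; right; rfl)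
  · apply Ideal.span_le.mpr
    have ha : a ∈ Ideal.span {a, b} := Ideal.subset_span (by left; rfl)
    have hb : b ∈ Ideal.span {a, b} := Ideal.subset_span (by right; rfl)
    rintro z (rfl | rfl | rfl)
    · rw [pow_two, pow_two]
      exact Ideal.mul_mem_mul ha ha
    · rw [pow_two]
      exact Ideal.mul_mem_mul ha hb
    · rw [pow_two, pow_two]
      exact Ideal.mul_mem_mul hb hb

lemma C_one' : (C (σ := Fin 2) (R := ℂ)) (1 : ℂ) = 1 := map_one _

lemma C_negone : (C (σ := Fin 2) (R := ℂ)) (-1 : ℂ) = -1 := by rw [map_neg, map_one]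

lemma sigma_neg_u : sigma (-1) (X 1 + X 0 : S) = X 1 := by
  rw [map_add, sigma_X1, sigma_X0, C_negone]
  ring

lemma sigma_pos_u : sigma 1 (X 1 : S) = X 1 + X 0 := by
  rw [sigma_X1, C_one', one_mul]

end SqAux

open MvPowerSeries in
/-- In `ℂ[[x,y]]`, `(y+x, x^{2m})² = ((y+x)², (y+x)x^{2m}, x^{4m})`, and this ideal is
integrally closed, for every `m ≥ 1`. -/
theorem square_ideal_eq_and_integrallyClosed (m : ℕ) (hm : 0 < m) :
    letI x : MvPowerSeries (Fin 2) ℂ := X 0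
    letI y : MvPowerSeries (Fin 2) ℂ := X 1
    Ideal.span {y + x, x ^ (2 * m)} ^ 2 =
      Ideal.span {(y + x) ^ 2, (y + x) * x ^ (2 * m), x ^ (4 * m)} ∧
    IdealIsIntegrallyClosed (Ideal.span {(y + x) ^ 2, (y + x) * x ^ (2 * m), x ^ (4 * m)}) := by
  constructor
  · have h := SqAux.span_pair_sq (X 1 + X 0 : SqAux.S) (X 0 ^ (2 * m))
    have h2 : ((X 0 : SqAux.S) ^ (2 * m)) ^ 2 = X 0 ^ (4 * m) := by
      rw [← pow_mul, show 2 * m * 2 = 4 * m by ring]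
    rw [h2] at h
    exact h
  · intro f hf
    obtain ⟨n, hn, a, ha, heq⟩ := hf
    set J : Ideal SqAux.S :=
      Ideal.span {(X 1 + X 0 : SqAux.S) ^ 2, (X 1 + X 0) * X 0 ^ (2 * m), X 0 ^ (4 * m)} with hJ
    have hJK : Ideal.map (SqAux.sigma (-1)) J ≤ SqAux.K m := by
      rw [hJ, Ideal.map_span, Ideal.span_le]
      rintro z ⟨g', (rfl | rfl | rfl), rfl⟩
      · rw [map_pow, SqAux.sigma_neg_u]
        exact Ideal.subset_span (by left; rfl)
      · rw [map_mul, map_pow, SqAux.sigma_neg_u, SqAux.sigma_X0]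
        exact Ideal.subset_span (by right; left; rfl)
      · rw [map_pow, SqAux.sigma_X0]
        exact Ideal.subset_span (by right; right; rfl)
    have hKJ : Ideal.map (SqAux.sigma 1) (SqAux.K m) ≤ J := by
      rw [SqAux.K, Ideal.map_span, Ideal.span_le]
      rintro z ⟨g', (rfl | rfl | rfl), rfl⟩
      · rw [map_pow, SqAux.sigma_pos_u]
        exact Ideal.subset_span (by left; rfl)
      · rw [map_mul, map_pow, SqAux.sigma_pos_u, SqAux.sigma_X0]
        exact Ideal.subset_span (by right; left; rfl)
      · rw [map_pow, SqAux.sigma_X0]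
        exact Ideal.subset_span (by right; right; rfl)
    set g : SqAux.S := SqAux.sigma (-1) f with hg
    have heq2 : g ^ n + ∑ i ∈ Finset.Icc 1 n, (SqAux.sigma (-1)) (a i) * g ^ (n - i) = 0 := by
      have h := congrArg (SqAux.sigma (-1)) heq
      rw [map_zero, map_add, map_pow, map_sum] at h
      simpa only [map_mul, map_pow] using h
    have hb : ∀ i ∈ Finset.Icc 1 n, SqAux.sigma (-1) (a i) ∈ SqAux.VI m (i * (4 * m)) := by
      intro i hi
      have h1 : SqAux.sigma (-1) (a i) ∈ Ideal.map (SqAux.sigma (-1)) (J ^ i) :=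
        Ideal.mem_map_of_mem _ (ha i hi)
      rw [Ideal.map_pow] at h1
      exact SqAux.Kpow_le m i (Ideal.pow_right_mono hJK i h1)
    have hgK : g ∈ SqAux.K m :=
      SqAux.mem_K_of_V m hm (SqAux.main_int m hm g n hn (fun i => SqAux.sigma (-1) (a i)) hb heq2)
    have hfJ : SqAux.sigma 1 g ∈ Ideal.map (SqAux.sigma 1) (SqAux.K m) :=
      Ideal.mem_map_of_mem _ hgK
    have hid : SqAux.sigma 1 g = f := SqAux.sigma_inv f
    exact hKJ (hid ▸ hfJ)
end
end

section
/- Let q(x) = x, m a positive even integer, and ψ_0 ∈ ℂ with Im(ψ_0) > 0. Then there is a neighborhood of 0 in ℂ² and a constant C > 0 such that for all (x,y) with Im(x) > 0 and Im(y) > 0 in that neighborhood, |y + q(x)| + |x|^m ≤ C·|y + q(x) + ψ_0 x^m|. -/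
lemma im_pow_le_aux (n : ℕ) (x : ℂ) (hx : 0 ≤ x.im) :
    |(x ^ (n+1)).im| ≤ (n+1) * ‖x‖ ^ n * x.im := by
  induction n with
  | zero => simp [abs_of_nonneg hx]
  | succ n ih =>
    have h1 : x ^ (n+2) = x ^ (n+1) * x := by ring
    have hre : |(x ^ (n+1)).re| ≤ ‖x‖ ^ (n+1) := by
      simpa [norm_pow] using Complex.abs_re_le_norm (x ^ (n+1))
    have hxre : |x.re| ≤ ‖x‖ := Complex.abs_re_le_norm x
    have hxa : (0:ℝ) ≤ ‖x‖ := norm_nonneg x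
    have hB : (0:ℝ) ≤ (n+1) * ‖x‖ ^ n * x.im := by positivity
    rw [h1, Complex.mul_im]
    calc |(x ^ (n+1)).re * x.im + (x ^ (n+1)).im * x.re|
        ≤ |(x ^ (n+1)).re * x.im| + |(x ^ (n+1)).im * x.re| := abs_add_le _ _
      _ = |(x ^ (n+1)).re| * x.im + |(x ^ (n+1)).im| * |x.re| := by
          rw [abs_mul, abs_mul, abs_of_nonneg hx]
      _ ≤ ‖x‖ ^ (n+1) * x.im
            + ((n+1) * ‖x‖ ^ n * x.im) * ‖x‖ :=
          add_le_add (mul_le_mul_of_nonneg_right hre hx)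
            (mul_le_mul ih hxre (abs_nonneg _) hB)
      _ = (↑(n+1)+1) * ‖x‖ ^ (n+1) * x.im := by push_cast; ring

lemma re_pow_ge_aux (j : ℕ) (x : ℂ) (hx : 0 ≤ x.im) :
    ‖x‖ ^ (2*(j+1)) - 2 * ((j:ℝ)+1)^2 * ‖x‖ ^ (2*j) * x.im ^ 2
      ≤ (x ^ (2*(j+1))).re := by
  set w := x ^ (j+1) with hw
  have h1 : x ^ (2*(j+1)) = w * w := by rw [hw]; ring
  have h2 : (w * w).re = w.re * w.re - w.im * w.im := Complex.mul_re w w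
  have h3 : ‖x‖ ^ (2*(j+1)) = w.re * w.re + w.im * w.im := by
    have h : ‖x‖ ^ (2*(j+1)) = ‖w‖ ^ 2 := by
      rw [hw, norm_pow]; ring
    rw [h, Complex.sq_norm, Complex.normSq_apply]
  have h4 : |w.im| ≤ ((j:ℝ)+1) * ‖x‖ ^ j * x.im := by
    exact_mod_cast im_pow_le_aux j x hx
  have h5 : w.im ^ 2 ≤ (((j:ℝ)+1) * ‖x‖ ^ j * x.im) ^ 2 := by
    have h := sq_abs w.im
    nlinarith [abs_nonneg w.im]
  have hexp : (‖x‖ ^ j) ^ 2 = ‖x‖ ^ (2*j) := by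
    rw [← pow_mul]; ring_nf
  have h5' : w.im ^ 2 ≤ ((j:ℝ)+1)^2 * ‖x‖ ^ (2*j) * x.im ^ 2 := by
    calc w.im ^ 2 ≤ (((j:ℝ)+1) * ‖x‖ ^ j * x.im) ^ 2 := h5
      _ = ((j:ℝ)+1)^2 * (‖x‖ ^ j) ^ 2 * x.im ^ 2 := by ring
      _ = ((j:ℝ)+1)^2 * ‖x‖ ^ (2*j) * x.im ^ 2 := by rw [hexp]
  rw [h1, h2]
  linarith [h3, h5']

set_option maxHeartbeats 1000000 in
/-- (Special case of Bickel–Knese–Pascoe–Sola, Thm 1.2, with `q(x) = x`.)  If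
`Im ψ₀ > 0` and `m` is even and positive, then on the bi-upper-half-plane near the
origin, `|y + x| + |x|^m ≤ C·|y + x + ψ₀ x^m|`. -/
theorem halfplane_bound_q_eq_x (ψ₀ : ℂ) (hψ : 0 < ψ₀.im) (m : ℕ) (hm : 0 < m)
    (hme : Even m) :
    ∃ ε > (0:ℝ), ∃ C > (0:ℝ), ∀ x y : ℂ,
      ‖x‖ < ε → ‖y‖ < ε → 0 < x.im → 0 < y.im →
        ‖y + x‖ + ‖x‖ ^ m ≤ C * ‖y + x + ψ₀ * x ^ m‖ := by
  obtain ⟨k, hk⟩ := hme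
  obtain ⟨j, rfl⟩ : ∃ j, k = j + 1 := ⟨k - 1, by omega⟩
  have hm2 : m = 2 * (j + 1) := by omega
  subst hm2
  set A := ‖ψ₀‖ with hA
  have hψne : ψ₀ ≠ 0 := by
    intro h; rw [h] at hψ; simp at hψ
  have hA0 : 0 < A := norm_pos_iff.mpr hψne
  set M : ℝ := |ψ₀.re| * (2*((j:ℝ)+1)) + 2 * ((j:ℝ)+1)^2 * ψ₀.im with hM
  have hM0 : 0 < M := by positivity
  refine ⟨min 1 (1/(2*M)), by positivity, max (2*(1+1/(2*A))) ((2*A+1)/ψ₀.im), ?_, ?_⟩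
  · exact lt_max_of_lt_left (by positivity)
  intro x y hxε hyε hxim hyim
  set r := ‖x‖ with hr
  have hr0 : 0 ≤ r := norm_nonneg x
  have hbr : x.im ≤ r := (le_abs_self _).trans (Complex.abs_im_le_norm x)
  have hr1 : r < 1 := lt_of_lt_of_le hxε (min_le_left _ _)
  have hrM : r < 1/(2*M) := lt_of_lt_of_le hxε (min_le_right _ _)
  set C := max (2*(1+1/(2*A))) ((2*A+1)/ψ₀.im) with hC
  have hC1 : 2*(1+1/(2*A)) ≤ C := le_max_left _ _
  have hC2 : (2*A+1)/ψ₀.im ≤ C := le_max_right _ _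
  set S := ‖y + x‖ with hS
  set T := ‖y + x + ψ₀ * x ^ (2*(j+1))‖ with hT
  have hS0 : 0 ≤ S := norm_nonneg _
  have hT0 : 0 ≤ T := norm_nonneg _
  have hrm0 : (0:ℝ) ≤ r ^ (2*(j+1)) := by positivity
  -- key imaginary-part lower bound
  have him : ψ₀.im * r ^ (2*(j+1)) ≤ T := by
    have h4 : |(x ^ (2*(j+1))).im| ≤ (2*((j:ℝ)+1)) * r ^ (2*j+1) * x.im := by
      have h := im_pow_le_aux (2*j+1) x hxim.le
      have he : 2*j+1+1 = 2*(j+1) := by ring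
      rw [he] at h
      calc |(x ^ (2*(j+1))).im| ≤ (↑(2*j+1)+1) * r ^ (2*j+1) * x.im := h
        _ = (2*((j:ℝ)+1)) * r ^ (2*j+1) * x.im := by push_cast; ring
    have h5 : r ^ (2*(j+1)) - 2 * ((j:ℝ)+1)^2 * r ^ (2*j) * x.im ^ 2
        ≤ (x ^ (2*(j+1))).re := re_pow_ge_aux j x hxim.le
    have hmul : (ψ₀ * x ^ (2*(j+1))).im
        = ψ₀.re * (x ^ (2*(j+1))).im + ψ₀.im * (x ^ (2*(j+1))).re := Complex.mul_im _ _
    have hadd : (y + x + ψ₀ * x ^ (2*(j+1))).im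
        = y.im + x.im + (ψ₀ * x ^ (2*(j+1))).im := by simp
    -- lower bound on ψ₀.re * Im(x^m)
    have hb1 : -(|ψ₀.re| * ((2*((j:ℝ)+1)) * r ^ (2*j+1) * x.im))
        ≤ ψ₀.re * (x ^ (2*(j+1))).im := by
      have h := neg_abs_le (ψ₀.re * (x ^ (2*(j+1))).im)
      have h2 : |ψ₀.re * (x ^ (2*(j+1))).im|
          ≤ |ψ₀.re| * ((2*((j:ℝ)+1)) * r ^ (2*j+1) * x.im) := by
        rw [abs_mul]
        exact mul_le_mul_of_nonneg_left h4 (abs_nonneg _)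
      linarith
    -- lower bound on ψ₀.im * Re(x^m)
    have hb2 : ψ₀.im * r ^ (2*(j+1)) - ψ₀.im * (2 * ((j:ℝ)+1)^2 * r ^ (2*j) * x.im ^ 2)
        ≤ ψ₀.im * (x ^ (2*(j+1))).re := by nlinarith
    -- bad terms are small
    have hbb : r ^ (2*j) * x.im ^ 2 ≤ r ^ (2*j+1) * x.im := by
      have he : r ^ (2*j+1) = r ^ (2*j) * r := by ring
      have hpow : (0:ℝ) ≤ r ^ (2*j) := by positivity
      rw [he]
      have h : x.im ^ 2 ≤ r * x.im := by nlinarith [hxim.le]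
      calc r ^ (2*j) * x.im ^ 2 ≤ r ^ (2*j) * (r * x.im) :=
            mul_le_mul_of_nonneg_left h hpow
        _ = r ^ (2*j) * r * x.im := by ring
    have hrsm : r ^ (2*j+1) ≤ r := by
      calc r ^ (2*j+1) ≤ r ^ 1 := pow_le_pow_of_le_one hr0 hr1.le (by omega)
        _ = r := pow_one r
    have hbad : M * (r ^ (2*j+1) * x.im) ≤ x.im / 2 := by
      have h1 : r ^ (2*j+1) * x.im ≤ r * x.im :=
        mul_le_mul_of_nonneg_right hrsm hxim.le
      have h2 : M * r ≤ 1/2 := by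
        rw [lt_div_iff₀ (by positivity)] at hrM
        nlinarith
      nlinarith [hxim.le, mul_le_mul_of_nonneg_left h1 hM0.le]
    have hsum : |ψ₀.re| * ((2*((j:ℝ)+1)) * r ^ (2*j+1) * x.im)
        + ψ₀.im * (2 * ((j:ℝ)+1)^2 * r ^ (2*j) * x.im ^ 2)
        ≤ M * (r ^ (2*j+1) * x.im) := by
      rw [hM]
      have h := mul_le_mul_of_nonneg_left hbb (by positivity : (0:ℝ) ≤ 2 * ((j:ℝ)+1)^2 * ψ₀.im)
      nlinarith [abs_nonneg ψ₀.re]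
    have himT : ψ₀.im * r ^ (2*(j+1)) ≤ (y + x + ψ₀ * x ^ (2*(j+1))).im := by
      rw [hadd, hmul]; nlinarith [hb1, hb2, hsum, hbad, hyim, hxim]
    exact himT.trans ((le_abs_self _).trans
      (Complex.abs_im_le_norm (y + x + ψ₀ * x ^ (2*(j+1)))))
  have habsψ : ‖ψ₀ * x ^ (2*(j+1))‖ = A * r ^ (2*(j+1)) := by
    rw [norm_mul, norm_pow]
  clear_value S T C A r M
  by_cases hcase : 2 * A * r ^ (2*(j+1)) ≤ S
  · -- |y+x| dominates
    have htri : S - A * r ^ (2*(j+1)) ≤ T := by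
      have h := norm_sub_norm_le (y + x) (-(ψ₀ * x ^ (2*(j+1))))
      rw [sub_neg_eq_add, norm_neg, habsψ] at h
      rw [hT, hS]
      linarith
    have h1 : S / 2 ≤ T := by nlinarith
    have h2 : r ^ (2*(j+1)) ≤ S / (2*A) := by
      rw [le_div_iff₀ (by positivity)]; nlinarith
    have hc : (0:ℝ) < 1 + 1/(2*A) := by positivity
    calc S + r ^ (2*(j+1)) ≤ S + S / (2*A) := by linarith
      _ = S * (1 + 1/(2*A)) := by ring
      _ ≤ (2*(1+1/(2*A))) * T := by
          linarith [mul_le_mul_of_nonneg_left h1 hc.le]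
      _ ≤ C * T := mul_le_mul_of_nonneg_right hC1 hT0
  · push_neg at hcase
    calc S + r ^ (2*(j+1)) ≤ (2*A+1) * r ^ (2*(j+1)) := by nlinarith
      _ = ((2*A+1)/ψ₀.im) * (ψ₀.im * r ^ (2*(j+1))) := by
          field_simp
      _ ≤ ((2*A+1)/ψ₀.im) * T :=
          mul_le_mul_of_nonneg_left him (by positivity)
      _ ≤ C * T := mul_le_mul_of_nonneg_right hC2 hT0
end

section
/- Let ψ_0 ∈ ℂ with Im ψ_0 > 0 and m an even positive integer. Then for all real x, y with |x|, |y| small, |y + x| + |x|^m ≤ C·|y + x + ψ_0 x^m| for some constant C > 0 independent of x, y. -/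
/-!
Write `z = a + w t` with `a` real, `t ≥ 0` and `Im w > 0`. The imaginary part `Im z = (Im w) t`
controls `t`, and then the real part `Re z = a + (Re w) t` controls `a`; both parts are bounded
by `‖z‖`. Apply this to `a = y + x` and `t = x ^ m`, which is `|x| ^ m` because `m` is even.
The resulting bound holds for all real `x, y`, so any `ε` will do.
-/

namespace Complex

lemma le_norm_add_ofReal_mul_div_im (w : ℂ) (hw : 0 < w.im) (a t : ℝ) :
    t ≤ ‖(a : ℂ) + w * t‖ / w.im := by
  rw [le_div_iff₀ hw]
  calc t * w.im = ((a : ℂ) + w * t).im := by simp [mul_comm]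
    _ ≤ ‖(a : ℂ) + w * t‖ := im_le_norm _

lemma abs_add_le_mul_norm_add_ofReal_mul (w : ℂ) (hw : 0 < w.im) (a : ℝ) {t : ℝ} (ht : 0 ≤ t) :
    |a| + t ≤ (1 + (|w.re| + 1) / w.im) * ‖(a : ℂ) + w * t‖ := by
  set r := ‖(a : ℂ) + w * t‖
  have ht_le : t ≤ r / w.im := le_norm_add_ofReal_mul_div_im w hw a t
  have ha_le : |a| ≤ r + |w.re| * t :=
    calc |a| = |((a : ℂ) + w * t).re - w.re * t| := by simp
      _ ≤ |((a : ℂ) + w * t).re| + |w.re * t| := abs_sub _ _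
      _ ≤ r + |w.re| * t := by
        rw [abs_mul, abs_of_nonneg ht]
        gcongr
        exact abs_re_le_norm _
  calc |a| + t ≤ r + (|w.re| + 1) * t := by linarith
    _ ≤ r + (|w.re| + 1) * (r / w.im) := by gcongr
    _ = (1 + (|w.re| + 1) / w.im) * r := by ring

end Complex

theorem real_bound_q_eq_x_general (ψ₀ : ℂ) (hψ : 0 < ψ₀.im) (m : ℕ)
    (hme : Even m) :
    ∃ ε > (0:ℝ), ∃ C > (0:ℝ), ∀ x y : ℝ, |x| < ε → |y| < ε →
      |y + x| + |x| ^ m ≤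
        C * ‖(y : ℂ) + (x : ℂ) + ψ₀ * (x : ℂ) ^ m‖ := by
  refine ⟨1, one_pos, 1 + (|ψ₀.re| + 1) / ψ₀.im, by positivity, fun x y _ _ => ?_⟩
  have hcast : (y : ℂ) + (x : ℂ) + ψ₀ * (x : ℂ) ^ m =
      ((y + x : ℝ) : ℂ) + ψ₀ * ((x ^ m : ℝ) : ℂ) := by
    push_cast; ring
  rw [hcast, hme.pow_abs]
  exact Complex.abs_add_le_mul_norm_add_ofReal_mul ψ₀ hψ (y + x) (hme.pow_nonneg x)

/-- If `Im ψ₀ > 0` and `m` is even and positive, then for all real `x, y` near `0`,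
`|y + x| + |x|^m ≤ C·|y + x + ψ₀ x^m|` for some constant `C > 0`. -/
theorem real_bound_q_eq_x (ψ₀ : ℂ) (hψ : 0 < ψ₀.im) (m : ℕ) (hm : 0 < m)
    (hme : Even m) :
    ∃ ε > (0:ℝ), ∃ C > (0:ℝ), ∀ x y : ℝ, |x| < ε → |y| < ε →
      |y + x| + |x| ^ m ≤
        C * ‖(y : ℂ) + (x : ℂ) + ψ₀ * (x : ℂ) ^ m‖ :=
  real_bound_q_eq_x_general ψ₀ hψ m hme
end

section
/- The function (x,y) ↦ y + x + i x^2 has no zeros in {(x,y) ∈ ℂ² : Im x ≥ 0, Im y ≥ 0, 0 < |x|² + |y|² < 1} ; i.e., on the closed upper bi-half-plane near the origin, y + x + i x² vanishes only at the origin. -/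
/-!
If `y + x + i x² = 0` then `Im y = -Im (x + i x²) = b² - b - a²` for `x = a + b i`.
With `0 ≤ b < 1` (the latter from `|x| < 1`) this is `≤ -a²`, so `Im y ≥ 0` forces `a = b = 0`,
hence `x = 0` and then `y = 0`.
-/

open Complex

lemma Complex.im_add_I_mul_sq (x : ℂ) : (x + I * x ^ 2).im = x.im + x.re ^ 2 - x.im ^ 2 := by
  simp only [add_im, mul_im, I_re, I_im, sq, mul_re]
  ring

lemma Complex.eq_zero_of_im_add_I_mul_sq_nonpos {x : ℂ} (hx₀ : 0 ≤ x.im) (hx₁ : x.im < 1)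
    (h : (x + I * x ^ 2).im ≤ 0) : x = 0 := by
  rw [im_add_I_mul_sq] at h
  have hre : x.re = 0 := by nlinarith [sq_nonneg x.re]
  have him : x.im = 0 := by nlinarith
  exact ext hre him

/-- The function `(x,y) ↦ y + x + i x²` has no zeros on the product of closed upper
half-planes intersected with the punctured unit ball `0 < |x|² + |y|² < 1`. -/
theorem no_zeros_on_closed_bihalfplane :
    ∀ x y : ℂ, 0 ≤ x.im → 0 ≤ y.im →
      0 < ‖x‖ ^ 2 + ‖y‖ ^ 2 →
      ‖x‖ ^ 2 + ‖y‖ ^ 2 < 1 →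
      y + x + Complex.I * x ^ 2 ≠ 0 := by
  intro x y hx hy hpos hlt hzero
  have hy_eq : y = -(x + I * x ^ 2) := by linear_combination hzero
  have hx_norm : ‖x‖ < 1 := by nlinarith [norm_nonneg x, sq_nonneg ‖y‖]
  have hx_im : x.im < 1 := (le_abs_self _).trans_lt ((abs_im_le_norm x).trans_lt hx_norm)
  have hx0 : x = 0 :=
    eq_zero_of_im_add_I_mul_sq_nonpos hx hx_im (by rw [hy_eq, neg_im] at hy; linarith)
  simp [hx0, hy_eq] at hpos
end
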